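/- arXiv:1905.01849 — 4 statements merged into one kernel-verified Lean document; each statement's English description precedes it below -/
import Mathlib

section
/- For any real-valued u in L^2(T), the eigenvalues λ_0(u) ≤ λ_1(u) ≤ ... of the Lax operator L_u (listed in increasing order with multiplicities) satisfy λ_{n+1}(u) ≥ λ_n(u) + 1 for all n ≥ 0; in particular all eigenvalues of L_u are simple. -/
open MeasureTheory Complex Real

noncomputable section

namespace BO

/-- The circle `ℝ/2πℤ`. -/
abbrev Circ := AddCircle (2 * π)

instance : Fact (0 < 2 * π) := ⟨by positivity⟩

/-- Normalized Haar measure on the circle (total mass `1`, i.e. `(1/2π) dx`). -/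
abbrev μ : Measure Circ := AddCircle.haarAddCircle

/-- The inner product `⟨f|g⟩ = (1/2π)∫₀^{2π} f(x) conj (g x) dx`. -/
def ip (f g : Circ → ℂ) : ℂ := ∫ x, f x * (starRingEnd ℂ) (g x) ∂μ

/-- The constant function `1`. -/
def one : Circ → ℂ := fun _ => 1

/-- `f` belongs to the Hardy space `L²₊`: `f ∈ L²` and all negative Fourier modes vanish. -/
def Hardy (f : Circ → ℂ) : Prop :=
  MemLp f 2 μ ∧ ∀ n : ℤ, n < 0 → fourierCoeff f n = 0

/-- `f` belongs to the Sobolev space `H¹`. -/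
def H1 (f : Circ → ℂ) : Prop :=
  MemLp f 2 μ ∧ Summable fun n : ℤ => (n : ℝ) ^ 2 * ‖fourierCoeff f n‖ ^ 2

/-- `P` is the Szegő projector `Π : L² → L²₊`. -/
def IsSzego (P : (Circ → ℂ) → Circ → ℂ) : Prop :=
  ∀ f, MemLp f 2 μ → MemLp (P f) 2 μ ∧
    ∀ n : ℤ, fourierCoeff (P f) n = if 0 ≤ n then fourierCoeff f n else 0

/-- `D` is the Fourier multiplier `-i ∂ₓ`, defined (at least) on `H¹`. -/
def IsD (D : (Circ → ℂ) → Circ → ℂ) : Prop :=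
  ∀ f, H1 f → MemLp (D f) 2 μ ∧ ∀ n : ℤ, fourierCoeff (D f) n = n * fourierCoeff f n

/-- The shift operator `(S h)(x) = e^{ix} h(x)`. -/
def shift (f : Circ → ℂ) : Circ → ℂ := fun x => fourier 1 x * f x

/-- The Toeplitz operator `T_u h = Π(u h)` with real symbol `u`. -/
def Toep (P : (Circ → ℂ) → Circ → ℂ) (u : Circ → ℝ) (f : Circ → ℂ) : Circ → ℂ :=
  P fun x => (u x : ℂ) * f x

/-- The Lax operator `L_u = D - T_u` of the Benjamin–Ono equation. -/
def Lax (P D : (Circ → ℂ) → Circ → ℂ) (u : Circ → ℝ) (f : Circ → ℂ) : Circ → ℂ :=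
  fun x => D f x - Toep P u f x

/-- Spectral data for the selfadjoint operator `L_u`: `lam` lists the eigenvalues of `L_u`
in increasing order with multiplicities, and `f` is a corresponding orthonormal basis
of eigenfunctions of the Hardy space. -/
structure EigenSystem (P D : (Circ → ℂ) → Circ → ℂ) (u : Circ → ℝ)
    (lam : ℕ → ℝ) (f : ℕ → Circ → ℂ) : Prop where
  hardy : ∀ n, Hardy (f n)
  sobolev : ∀ n, H1 (f n)
  ortho : ∀ m n, ip (f m) (f n) = if m = n then 1 else 0
  eigen : ∀ n, Lax P D u (f n) =ᵐ[μ] fun x => (lam n : ℂ) * f n x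
  mono : Monotone lam
  complete : ∀ g, Hardy g → (∀ n, ip g (f n) = 0) → g =ᵐ[μ] 0

/-! ### Basic lemmas on Fourier coefficients and the pairing `ip` -/

lemma fourierCoeff_congr_ae {a b : Circ → ℂ} (h : a =ᵐ[μ] b) (n : ℤ) :
    fourierCoeff a n = fourierCoeff b n :=
  integral_congr_ae (h.mono fun x hx => by dsimp only; rw [hx])

lemma fourierCoeff_toLp'' {a : Circ → ℂ} (ha : MemLp a 2 μ) (n : ℤ) :
    fourierCoeff (↑(ha.toLp a) : Circ → ℂ) n = fourierCoeff a n :=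
  fourierCoeff_congr_ae ha.coeFn_toLp n

lemma ae_eq_of_fourierCoeff_eq {a b : Circ → ℂ} (ha : MemLp a 2 μ) (hb : MemLp b 2 μ)
    (h : ∀ n, fourierCoeff a n = fourierCoeff b n) : a =ᵐ[μ] b := by
  have he : ha.toLp a = hb.toLp b := by
    apply fourierBasis.repr.injective
    ext n
    rw [fourierBasis_repr, fourierBasis_repr, fourierCoeff_toLp'' ha, fourierCoeff_toLp'' hb, h]
  exact ha.coeFn_toLp.symm.trans (he ▸ hb.coeFn_toLp)

lemma ip_congr_left {a a' b : Circ → ℂ} (h : a =ᵐ[μ] a') : ip a b = ip a' b :=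
  integral_congr_ae (h.mono fun x hx => by dsimp only; rw [hx])

lemma ip_congr_right {a b b' : Circ → ℂ} (h : b =ᵐ[μ] b') : ip a b = ip a b' :=
  integral_congr_ae (h.mono fun x hx => by dsimp only; rw [hx])

lemma ip_conj (a b : Circ → ℂ) : (starRingEnd ℂ) (ip a b) = ip b a := by
  rw [ip, ← integral_conj]
  refine integral_congr_ae (Filter.Eventually.of_forall fun x => ?_)
  simp [mul_comm]

lemma ip_eq_inner {a b : Circ → ℂ} (ha : MemLp a 2 μ) (hb : MemLp b 2 μ) :
    ip a b = @inner ℂ _ _ (hb.toLp b) (ha.toLp a) := by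
  rw [MeasureTheory.L2.inner_def]
  refine integral_congr_ae ?_
  filter_upwards [ha.coeFn_toLp, hb.coeFn_toLp] with x hx hy
  rw [hx, hy, RCLike.inner_apply, mul_comm]

lemma hasSum_ip {a b : Circ → ℂ} (ha : MemLp a 2 μ) (hb : MemLp b 2 μ) :
    HasSum (fun n : ℤ => fourierCoeff a n * (starRingEnd ℂ) (fourierCoeff b n)) (ip a b) := by
  have H := fourierBasis.hasSum_inner_mul_inner (hb.toLp b) (ha.toLp a)
  rw [← ip_eq_inner ha hb] at H
  refine H.congr_fun fun n => ?_
  have h1 : (inner ℂ (fourierBasis n) (ha.toLp a) : ℂ) = fourierCoeff a n := by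
    rw [← fourierBasis.repr_apply_apply, fourierBasis_repr, fourierCoeff_toLp'' ha]
  have h2 : (inner ℂ (fourierBasis n) (hb.toLp b) : ℂ) = fourierCoeff b n := by
    rw [← fourierBasis.repr_apply_apply, fourierBasis_repr, fourierCoeff_toLp'' hb]
  have h3 : (inner ℂ (hb.toLp b) (fourierBasis n) : ℂ) = (starRingEnd ℂ) (fourierCoeff b n) := by
    rw [← h2, inner_conj_symm]
  rw [h1, h3]
  ring

lemma norm_fourier_apply (n : ℤ) (x : Circ) : ‖fourier n x‖ = 1 := by
  simp [fourier_apply, Circle.norm_coe]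

lemma memLp_fourier_mul {f : Circ → ℂ} (hf : MemLp f 2 μ) (m : ℤ) :
    MemLp (fun x => fourier m x * f x) 2 μ := by
  have hm : AEStronglyMeasurable (fun x => fourier m x * f x) μ :=
    ((fourier m).continuous.aestronglyMeasurable).mul hf.aestronglyMeasurable
  refine MemLp.of_le_mul (c := 1) hf hm (Filter.Eventually.of_forall fun x => ?_)
  rw [norm_mul, norm_fourier_apply, one_mul]

lemma fourierCoeff_fourier_mul (f : Circ → ℂ) (m n : ℤ) :
    fourierCoeff (fun x => fourier m x * f x) n = fourierCoeff f (n - m) := by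
  unfold fourierCoeff
  refine integral_congr_ae (Filter.Eventually.of_forall fun x => ?_)
  dsimp only
  rw [smul_eq_mul, smul_eq_mul, ← mul_assoc, ← fourier_add]
  have h : -n + m = -(n - m) := by ring
  rw [h]

lemma integrable_of_L2 {f : Circ → ℂ} (hf : MemLp f 2 μ) : Integrable f μ :=
  hf.integrable (by norm_num)

lemma integrable_fourier_smul {f : Circ → ℂ} (hf : Integrable f μ) (n : ℤ) :
    Integrable (fun x => fourier n x • f x) μ := by
  refine Integrable.bdd_mul hf ((fourier n).continuous.aestronglyMeasurable) (c := 1)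
    (Filter.Eventually.of_forall fun x => ?_)
  rw [norm_fourier_apply]

lemma integrable_mul_conj {a b : Circ → ℂ} (ha : MemLp a 2 μ) (hb : MemLp b 2 μ) :
    Integrable (fun x => a x * (starRingEnd ℂ) (b x)) μ := by
  have H := MeasureTheory.L2.integrable_inner (𝕜 := ℂ) (hb.toLp b) (ha.toLp a)
  refine H.congr ?_
  filter_upwards [ha.coeFn_toLp, hb.coeFn_toLp] with x hx hy
  rw [RCLike.inner_apply, hx, hy, mul_comm]

lemma fourierCoeff_add' {a b : Circ → ℂ} (ha : MemLp a 2 μ) (hb : MemLp b 2 μ) (n : ℤ) :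
    fourierCoeff (fun x => a x + b x) n = fourierCoeff a n + fourierCoeff b n := by
  unfold fourierCoeff
  rw [← integral_add (integrable_fourier_smul (integrable_of_L2 ha) (-n))
      (integrable_fourier_smul (integrable_of_L2 hb) (-n))]
  refine integral_congr_ae (Filter.Eventually.of_forall fun x => ?_)
  dsimp only
  rw [smul_add]

lemma fourierCoeff_const_mul' (a : Circ → ℂ) (c : ℂ) (n : ℤ) :
    fourierCoeff (fun x => c * a x) n = c * fourierCoeff a n :=
  fourierCoeff.const_mul a c n

lemma ip_sub_left {A B b : Circ → ℂ} (hA : MemLp A 2 μ) (hB : MemLp B 2 μ)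
    (hb : MemLp b 2 μ) :
    ip (fun x => A x - B x) b = ip A b - ip B b := by
  rw [ip, ip, ip, ← integral_sub (integrable_mul_conj hA hb) (integrable_mul_conj hB hb)]
  refine integral_congr_ae (Filter.Eventually.of_forall fun x => ?_)
  dsimp only
  ring

lemma ip_smul_right (a b : Circ → ℂ) (c : ℂ) :
    ip a (fun x => c * b x) = (starRingEnd ℂ) c * ip a b := by
  rw [ip, ip, ← integral_const_mul]
  refine integral_congr_ae (Filter.Eventually.of_forall fun x => ?_)
  dsimp only
  rw [map_mul]
  ring

lemma ip_finset_sum_left (s : Finset ℕ) (c : ℕ → ℂ) (g : ℕ → Circ → ℂ)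
    (hg : ∀ j, MemLp (g j) 2 μ) (b : Circ → ℂ) (hb : MemLp b 2 μ) :
    ip (fun x => ∑ j ∈ s, c j * g j x) b = ∑ j ∈ s, c j * ip (g j) b := by
  rw [ip]
  have : ∀ x, (∑ j ∈ s, c j * g j x) * (starRingEnd ℂ) (b x)
      = ∑ j ∈ s, c j * (g j x * (starRingEnd ℂ) (b x)) := by
    intro x; rw [Finset.sum_mul]; refine Finset.sum_congr rfl fun j _ => by ring
  simp_rw [this]
  rw [integral_finset_sum]
  · refine Finset.sum_congr rfl fun j _ => ?_
    rw [integral_const_mul, ip]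
  · exact fun j _ => (integrable_mul_conj (hg j) hb).const_mul (c j)

lemma fourierCoeff_finset_sum (s : Finset ℕ) (c : ℕ → ℂ) (g : ℕ → Circ → ℂ)
    (hg : ∀ j, MemLp (g j) 2 μ) (n : ℤ) :
    fourierCoeff (fun x => ∑ j ∈ s, c j * g j x) n = ∑ j ∈ s, c j * fourierCoeff (g j) n := by
  unfold fourierCoeff
  have : ∀ x : Circ, fourier (-n) x • (∑ j ∈ s, c j * g j x)
      = ∑ j ∈ s, c j * (fourier (-n) x • g j x) := by
    intro x
    rw [smul_eq_mul, Finset.mul_sum]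
    refine Finset.sum_congr rfl fun j _ => by rw [smul_eq_mul]; ring
  simp_rw [this]
  rw [integral_finset_sum]
  · exact Finset.sum_congr rfl fun j _ => by rw [integral_const_mul]
  · exact fun j _ =>
      (integrable_fourier_smul (integrable_of_L2 (hg j)) (-n)).const_mul (c j)

lemma memLp_finset_sum (s : Finset ℕ) (c : ℕ → ℂ) (g : ℕ → Circ → ℂ)
    (hg : ∀ j, MemLp (g j) 2 μ) :
    MemLp (fun x => ∑ j ∈ s, c j * g j x) 2 μ := by
  classical
  induction s using Finset.induction with
  | empty => simpa using (memLp_const (0 : ℂ) : MemLp (fun _ : Circ => (0:ℂ)) 2 μ)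
  | insert j s' hj ih =>
    have : (fun x => ∑ k ∈ insert j s', c k * g k x)
        = fun x => c j * g j x + ∑ k ∈ s', c k * g k x := by
      funext x; rw [Finset.sum_insert hj]
    rw [this]
    exact (((hg j).const_mul (c j)).add ih)


/-! ### H¹ functions have bounded representatives -/

lemma summable_norm_coeff {f : Circ → ℂ}
    (hf : Summable fun n : ℤ => (n : ℝ)^2 * ‖fourierCoeff f n‖^2) :
    Summable fun n : ℤ => ‖fourierCoeff f n‖ := by
  set a := fun n : ℤ => ‖fourierCoeff f n‖ with ha
  have h1 : Summable (fun n : ℤ => 1 / (n:ℝ)^2) :=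
    summable_one_div_int_pow.mpr one_lt_two
  have hM : Summable (fun n : ℤ =>
      (if n = 0 then a 0 else 0) + (1/(n:ℝ)^2 + (n:ℝ)^2 * ‖fourierCoeff f n‖^2)/2) := by
    refine Summable.add ?_ ((h1.add hf).div_const 2)
    refine summable_of_ne_finset_zero (s := {(0:ℤ)}) fun b hb => ?_
    simp only [Finset.mem_singleton] at hb
    simp [hb]
  refine Summable.of_nonneg_of_le (fun n => norm_nonneg _) (fun n => ?_) hM
  by_cases h : n = 0
  · subst h
    have h0 : (if (0:ℤ) = 0 then a 0 else 0) = a 0 := if_pos rfl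
    rw [h0]
    have : (0:ℝ) ≤ (1/((0:ℤ):ℝ)^2 + ((0:ℤ):ℝ)^2 * ‖fourierCoeff f 0‖^2)/2 := by
      push_cast; norm_num
    linarith
  · rw [if_neg h]
    have hn1 : (1:ℝ) ≤ |(n:ℝ)| := by
      rw [← Int.cast_abs]
      exact_mod_cast Int.one_le_abs (by exact_mod_cast h)
    have hn0 : |(n:ℝ)| ≠ 0 := by linarith
    have key := two_mul_le_add_sq (1/|(n:ℝ)|) (|(n:ℝ)| * a n)
    have he : (1/|(n:ℝ)|) * (|(n:ℝ)| * a n) = a n := by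
      field_simp
    have h2 : (1/|(n:ℝ)|)^2 = 1/(n:ℝ)^2 := by
      rw [div_pow, one_pow, _root_.sq_abs]
    have h3 : (|(n:ℝ)| * a n)^2 = (n:ℝ)^2 * ‖fourierCoeff f n‖^2 := by
      rw [mul_pow, _root_.sq_abs, ha]
    nlinarith [key, he, h2, h3]

lemma ae_eq_continuous_of_summable {f : Circ → ℂ} (hf2 : MemLp f 2 μ)
    (hs : Summable fun n : ℤ => ‖fourierCoeff f n‖) :
    ∃ F : C(Circ, ℂ), f =ᵐ[μ] ⇑F := by
  have hsum : Summable (fun n : ℤ => fourierCoeff f n • (fourier n : C(Circ,ℂ))) := by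
    refine Summable.of_norm ?_
    simpa [norm_smul, fourier_norm] using hs
  refine ⟨∑' n : ℤ, fourierCoeff f n • (fourier n : C(Circ,ℂ)), ?_⟩
  set F := ∑' n : ℤ, fourierCoeff f n • (fourier n : C(Circ,ℂ)) with hF
  have hC : HasSum (fun n : ℤ => fourierCoeff f n • (fourier n : C(Circ,ℂ))) F := hsum.hasSum
  have hLp := hC.mapL (ContinuousMap.toLp (E := ℂ) 2 μ ℂ)
  have hG := hasSum_fourier_series_L2 (hf2.toLp f)
  simp_rw [fourierCoeff_toLp'' hf2] at hG
  have heq : hf2.toLp f = ContinuousMap.toLp (E := ℂ) 2 μ ℂ F := by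
    refine hG.unique ?_
    convert hLp using 2 with n
    rw [map_smul]
  exact hf2.coeFn_toLp.symm.trans (heq ▸ ContinuousMap.coeFn_toLp (𝕜 := ℂ) μ F)

lemma H1.summable_norm {g : Circ → ℂ} (hg : H1 g) :
    Summable fun n : ℤ => ‖fourierCoeff g n‖ :=
  summable_norm_coeff hg.2

lemma hasSum_re_of_complex {ι : Type*} {f : ι → ℂ} {S : ℂ} (h : HasSum f S) :
    HasSum (fun i => (f i).re) S.re := by
  simpa using h.mapL Complex.reCLM

lemma hasSum_norm_sq_coeff {a : Circ → ℂ} (ha : MemLp a 2 μ) :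
    HasSum (fun n : ℤ => ‖fourierCoeff a n‖^2) (ip a a).re := by
  have H := hasSum_re_of_complex (hasSum_ip ha ha)
  refine H.congr_fun fun n => ?_
  rw [Complex.mul_conj]
  rw [Complex.ofReal_re, Complex.normSq_eq_norm_sq]

lemma summable_norm_sq_coeff {a : Circ → ℂ} (ha : MemLp a 2 μ) :
    Summable fun n : ℤ => ‖fourierCoeff a n‖^2 :=
  (hasSum_norm_sq_coeff ha).summable

/-! ### Multiplication by the symbol `u` -/

lemma memLp_symbol_mul {u : Circ → ℝ} (hu : MemLp (fun x => (u x:ℂ)) 2 μ) {g : Circ → ℂ}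
    (hg : H1 g) : MemLp (fun x => (u x:ℂ) * g x) 2 μ := by
  obtain ⟨F, hF⟩ := ae_eq_continuous_of_summable hg.1 hg.summable_norm
  have hm : AEStronglyMeasurable (fun x => (u x:ℂ) * g x) μ :=
    hu.aestronglyMeasurable.mul hg.1.aestronglyMeasurable
  refine MemLp.of_le_mul (c := ‖F‖) hu hm ?_
  filter_upwards [hF] with x hx
  rw [norm_mul, hx, mul_comm]
  gcongr
  exact F.norm_coe_le_norm x

/-! ### Coefficients of the Lax operator -/

section LaxFacts

variable {P D : (Circ → ℂ) → Circ → ℂ} {u : Circ → ℝ}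
variable (hP : IsSzego P) (hD : IsD D) (hu : MemLp (fun x => (u x:ℂ)) 2 μ)

include hP hu in
lemma memLp_Toep {g : Circ → ℂ} (hg : H1 g) : MemLp (Toep P u g) 2 μ :=
  (hP _ (memLp_symbol_mul hu hg)).1

include hP hu in
lemma coeff_Toep {g : Circ → ℂ} (hg : H1 g) (n : ℤ) :
    fourierCoeff (Toep P u g) n
      = if 0 ≤ n then fourierCoeff (fun x => (u x:ℂ) * g x) n else 0 :=
  (hP _ (memLp_symbol_mul hu hg)).2 n

include hP hD hu in
lemma memLp_Lax {g : Circ → ℂ} (hg : H1 g) : MemLp (Lax P D u g) 2 μ := by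
  have : Lax P D u g = fun x => D g x - Toep P u g x := rfl
  rw [this]
  exact ((hD g hg).1.sub (memLp_Toep hP hu hg))

include hP hD hu in
lemma coeff_Lax {g : Circ → ℂ} (hg : H1 g) (n : ℤ) :
    fourierCoeff (Lax P D u g) n
      = (n : ℂ) * fourierCoeff g n
        - (if 0 ≤ n then fourierCoeff (fun x => (u x:ℂ) * g x) n else 0) := by
  have h1 : fourierCoeff (Lax P D u g) n
      = fourierCoeff (D g) n - fourierCoeff (Toep P u g) n := by
    have hsub : Lax P D u g = fun x => D g x + (-1 : ℂ) * Toep P u g x := by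
      funext x; simp [Lax, sub_eq_add_neg]
    rw [hsub, fourierCoeff_add' (hD g hg).1 ((memLp_Toep hP hu hg).const_mul _),
      fourierCoeff_const_mul']
    ring
  rw [h1, (hD g hg).2 n, coeff_Toep hP hu hg n]

include hP hD hu in
lemma hardy_Lax {g : Circ → ℂ} (hgH : Hardy g) (hg : H1 g) : Hardy (Lax P D u g) := by
  refine ⟨memLp_Lax hP hD hu hg, fun n hn => ?_⟩
  rw [coeff_Lax hP hD hu hg n, hgH.2 n hn, if_neg (by omega), mul_zero, sub_zero]

include hP hD hu in
lemma lax_selfadjoint {a b : Circ → ℂ} (haH : Hardy a) (ha : H1 a) (hbH : Hardy b)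
    (hb : H1 b) : ip (Lax P D u a) b = ip a (Lax P D u b) := by
  have hua := memLp_symbol_mul hu ha
  have hub := memLp_symbol_mul hu hb
  -- D-part
  have hDab : ip (D a) b = ip a (D b) := by
    refine HasSum.unique (hasSum_ip (hD a ha).1 hb.1) ?_
    refine (hasSum_ip ha.1 (hD b hb).1).congr_fun fun n => ?_
    rw [(hD a ha).2 n, (hD b hb).2 n, map_mul, map_intCast]
    ring
  -- Toeplitz part
  have hTab : ip (Toep P u a) b = ip (fun x => (u x:ℂ) * a x) b := by
    refine HasSum.unique (hasSum_ip (memLp_Toep hP hu ha) hb.1) ?_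
    refine (hasSum_ip hua hb.1).congr_fun fun n => ?_
    rw [coeff_Toep hP hu ha n]
    by_cases h : 0 ≤ n
    · rw [if_pos h]
    · rw [if_neg h, hbH.2 n (by omega), map_zero, mul_zero, mul_zero]
  have hTba : ip (Toep P u b) a = ip (fun x => (u x:ℂ) * b x) a := by
    refine HasSum.unique (hasSum_ip (memLp_Toep hP hu hb) ha.1) ?_
    refine (hasSum_ip hub ha.1).congr_fun fun n => ?_
    rw [coeff_Toep hP hu hb n]
    by_cases h : 0 ≤ n
    · rw [if_pos h]
    · rw [if_neg h, haH.2 n (by omega), map_zero, mul_zero, mul_zero]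
  have hTab' : ip a (Toep P u b) = ip a (fun x => (u x:ℂ) * b x) := by
    rw [← ip_conj (Toep P u b) a, hTba, ip_conj]
  have hmid : ip (fun x => (u x:ℂ) * a x) b = ip a (fun x => (u x:ℂ) * b x) := by
    refine integral_congr_ae (Filter.Eventually.of_forall fun x => ?_)
    dsimp only
    rw [map_mul, Complex.conj_ofReal]
    ring
  have hlaxa : ip (Lax P D u a) b = ip (D a) b - ip (Toep P u a) b := by
    exact ip_sub_left (hD a ha).1 (memLp_Toep hP hu ha) hb.1
  have hlaxb : ip (Lax P D u b) a = ip (D b) a - ip (Toep P u b) a := by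
    exact ip_sub_left (hD b hb).1 (memLp_Toep hP hu hb) ha.1
  have hlaxb' : ip a (Lax P D u b) = ip a (D b) - ip a (Toep P u b) := by
    rw [← ip_conj (Lax P D u b) a, hlaxb, map_sub, ip_conj, ip_conj]
  rw [hlaxa, hlaxb', hDab, hTab, hTab', hmid]

end LaxFacts

/-! ### The Hardy subspace of `L²` as a closed submodule -/

def hardyLp : Submodule ℂ (Lp ℂ 2 μ) where
  carrier := {x | ∀ n : ℤ, n < 0 → fourierBasis.repr x n = 0}
  add_mem' := by
    intro a b ha hb n hn
    rw [map_add]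
    simp [ha n hn, hb n hn]
  zero_mem' := by intro n hn; simp
  smul_mem' := by
    intro c a ha n hn
    rw [_root_.map_smul]
    simp [ha n hn]

lemma isClosed_hardyLp : IsClosed (hardyLp : Set (Lp ℂ 2 μ)) := by
  have hset : (hardyLp : Set (Lp ℂ 2 μ))
      = ⋂ (n : ℤ) (_ : n < 0), {x : Lp ℂ 2 μ | (inner ℂ (fourierBasis n) x : ℂ) = 0} := by
    ext x
    simp only [Set.mem_iInter, Set.mem_setOf_eq]
    constructor
    · intro hx n hn
      rw [← fourierBasis.repr_apply_apply]
      exact hx n hn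
    · intro hx n hn
      rw [fourierBasis.repr_apply_apply]
      exact hx n hn
  rw [hset]
  refine isClosed_iInter fun n => isClosed_iInter fun _ => ?_
  exact isClosed_eq (Continuous.inner continuous_const continuous_id) continuous_const

lemma mem_hardyLp {a : Circ → ℂ} (ha : MemLp a 2 μ) (h : ∀ n : ℤ, n < 0 → fourierCoeff a n = 0) :
    ha.toLp a ∈ hardyLp := by
  intro n hn
  rw [fourierBasis_repr, fourierCoeff_toLp'' ha]
  exact h n hn

/-! ### Spectral expansion of the quadratic form of the Lax operator -/

section Spectral

variable {P D : (Circ → ℂ) → Circ → ℂ} {u : Circ → ℝ} {lam : ℕ → ℝ} {f : ℕ → Circ → ℂ}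
variable (hP : IsSzego P) (hD : IsD D) (hu : MemLp (fun x => (u x:ℂ)) 2 μ)
variable (hsys : EigenSystem P D u lam f)

include hP hD hu hsys in
lemma spectral_sums {g : Circ → ℂ} (hgH : Hardy g) (hg1 : H1 g) :
    HasSum (fun j => lam j * ‖ip g (f j)‖^2) (ip (Lax P D u g) g).re ∧
    HasSum (fun j => ‖ip g (f j)‖^2) (ip g g).re := by
  classical
  haveI : CompleteSpace hardyLp := isClosed_hardyLp.completeSpace_coe
  set FV : ℕ → hardyLp := fun j =>
    ⟨(hsys.hardy j).1.toLp (f j), mem_hardyLp (hsys.hardy j).1 (hsys.hardy j).2⟩ with hFV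
  have hinner : ∀ (a b : Circ → ℂ) (ha : MemLp a 2 μ) (hb : MemLp b 2 μ)
      (pa : ha.toLp a ∈ hardyLp) (pb : hb.toLp b ∈ hardyLp),
      (inner ℂ (⟨ha.toLp a, pa⟩ : hardyLp) (⟨hb.toLp b, pb⟩ : hardyLp) : ℂ) = ip b a := by
    intro a b ha hb pa pb
    rw [Submodule.coe_inner, ← ip_eq_inner hb ha]
  have horth : Orthonormal ℂ FV := by
    rw [orthonormal_iff_ite]
    intro i j
    rw [hFV]
    rw [hinner (f i) (f j) (hsys.hardy i).1 (hsys.hardy j).1 _ _]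
    rw [hsys.ortho j i]
    by_cases h : i = j
    · simp [h]
    · rw [if_neg (Ne.symm h), if_neg h]
  have hdense : (Submodule.span ℂ (Set.range FV)).topologicalClosure = ⊤ := by
    rw [Submodule.topologicalClosure_eq_top_iff]
    rw [Submodule.eq_bot_iff]
    intro x hx
    have hxmem := x.2
    have hgx : Hardy (⇑(↑x : Lp ℂ 2 μ)) := by
      refine ⟨Lp.memLp _, fun n hn => ?_⟩
      rw [← fourierBasis_repr]
      exact hxmem n hn
    have hipz : ∀ j, ip (⇑(↑x : Lp ℂ 2 μ)) (f j) = 0 := by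
      intro j
      rw [ip_eq_inner (Lp.memLp _) (hsys.hardy j).1]
      have htl : MemLp.toLp ⇑(↑x : Lp ℂ 2 μ) (Lp.memLp (↑x : Lp ℂ 2 μ)) = (↑x : Lp ℂ 2 μ) :=
        MeasureTheory.Lp.toLp_coeFn _ _
      rw [htl]
      have horthx := (Submodule.mem_orthogonal _ (x : hardyLp)).mp hx (FV j)
        (Submodule.subset_span (Set.mem_range_self j))
      have hcoe : (inner ℂ (FV j) x : ℂ) = inner ℂ ((hsys.hardy j).1.toLp (f j)) (↑x : Lp ℂ 2 μ) :=
        Submodule.coe_inner _ _ _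
      rw [← hcoe]
      exact horthx
    have hz := hsys.complete _ hgx hipz
    have hx0 : (↑x : Lp ℂ 2 μ) = 0 := by
      ext1
      filter_upwards [hz, Lp.coeFn_zero (E := ℂ) (p := 2) (μ := μ)] with y hy hy0
      rw [hy, hy0]
    exact Subtype.ext hx0
  set HB : HilbertBasis ℕ ℂ hardyLp := HilbertBasis.mk horth hdense.ge with hHB
  have hHBj : ∀ j, HB j = FV j := fun j =>
    congrFun (HilbertBasis.coe_mk horth hdense.ge) j
  have laxH := hardy_Lax hP hD hu hgH hg1
  have laxL := memLp_Lax hP hD hu hg1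
  set G : hardyLp := ⟨hgH.1.toLp g, mem_hardyLp hgH.1 hgH.2⟩ with hG
  set W : hardyLp := ⟨laxL.toLp _, mem_hardyLp laxL laxH.2⟩ with hW
  have keyG : ∀ j, (inner ℂ (FV j) G : ℂ) = ip g (f j) := fun j =>
    hinner (f j) g (hsys.hardy j).1 hgH.1 _ _
  have keyG' : ∀ j, (inner ℂ G (FV j) : ℂ) = (starRingEnd ℂ) (ip g (f j)) := by
    intro j
    rw [← keyG j]
    exact (inner_conj_symm G (FV j)).symm
  have keyW : ∀ j, (inner ℂ (FV j) W : ℂ) = (lam j : ℂ) * ip g (f j) := by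
    intro j
    rw [hW, hinner (f j) (Lax P D u g) (hsys.hardy j).1 laxL _ _,
      lax_selfadjoint hP hD hu hgH hg1 (hsys.hardy j) (hsys.sobolev j),
      ip_congr_right (hsys.eigen j), ip_smul_right, Complex.conj_ofReal]
  have hGW : (inner ℂ G W : ℂ) = ip (Lax P D u g) g :=
    hinner g (Lax P D u g) hgH.1 laxL _ _
  have hGG : (inner ℂ G G : ℂ) = ip g g := hinner g g hgH.1 hgH.1 _ _
  have hterm : ∀ (l : ℝ) (c : ℂ), (starRingEnd ℂ) c * ((l:ℂ) * c) = ((l * ‖c‖^2 : ℝ) : ℂ) := by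
    intro l c
    have h1 : c * (starRingEnd ℂ) c = ((‖c‖^2 : ℝ) : ℂ) := by
      rw [Complex.mul_conj, Complex.normSq_eq_norm_sq]
    calc (starRingEnd ℂ) c * ((l:ℂ) * c) = (l:ℂ) * (c * (starRingEnd ℂ) c) := by ring
      _ = (l:ℂ) * ((‖c‖^2 : ℝ):ℂ) := by rw [h1]
      _ = ((l * ‖c‖^2 : ℝ) : ℂ) := by push_cast; ring
  constructor
  · have HS := HB.hasSum_inner_mul_inner G W
    rw [hGW] at HS
    have HS' : HasSum (fun j => ((lam j * ‖ip g (f j)‖^2 : ℝ) : ℂ)) (ip (Lax P D u g) g) := by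
      refine HS.congr_fun fun j => ?_
      rw [hHBj j, keyG' j, keyW j, hterm]
    exact (hasSum_re_of_complex HS').congr_fun fun j => (Complex.ofReal_re _).symm
  · have HS := HB.hasSum_inner_mul_inner G G
    rw [hGG] at HS
    have HS' : HasSum (fun j => ((‖ip g (f j)‖^2 : ℝ) : ℂ)) (ip g g) := by
      refine HS.congr_fun fun j => ?_
      rw [hHBj j, keyG' j, keyG j]
      have := hterm 1 (ip g (f j))
      rw [Complex.ofReal_one, one_mul, one_mul] at this
      rw [this]
    exact (hasSum_re_of_complex HS').congr_fun fun j => (Complex.ofReal_re _).symm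

end Spectral

/-! ### Closure properties of `Hardy` and `H¹` -/

lemma hardy_zero : Hardy (fun _ : Circ => (0:ℂ)) := by
  refine ⟨memLp_const 0, fun n hn => ?_⟩
  have : fourierCoeff (fun _ : Circ => (0:ℂ)) n = 0 := by
    unfold fourierCoeff
    simp
  exact this

lemma h1_zero : H1 (fun _ : Circ => (0:ℂ)) := by
  refine ⟨memLp_const 0, ?_⟩
  have hc : ∀ n : ℤ, fourierCoeff (fun _ : Circ => (0:ℂ)) n = 0 := by
    intro n; unfold fourierCoeff; simp
  refine summable_of_ne_finset_zero (s := ∅) fun n _ => ?_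
  rw [hc n]
  simp

lemma hardy_add {a b : Circ → ℂ} (ha : Hardy a) (hb : Hardy b) :
    Hardy (fun x => a x + b x) := by
  refine ⟨ha.1.add hb.1, fun n hn => ?_⟩
  rw [fourierCoeff_add' ha.1 hb.1, ha.2 n hn, hb.2 n hn, add_zero]

lemma h1_add {a b : Circ → ℂ} (ha : H1 a) (hb : H1 b) : H1 (fun x => a x + b x) := by
  refine ⟨ha.1.add hb.1, ?_⟩
  refine Summable.of_nonneg_of_le (fun n => by positivity) (fun n => ?_)
    ((ha.2.mul_left 2).add (hb.2.mul_left 2))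
  rw [fourierCoeff_add' ha.1 hb.1]
  have h1 : ‖fourierCoeff a n + fourierCoeff b n‖^2
      ≤ 2*‖fourierCoeff a n‖^2 + 2*‖fourierCoeff b n‖^2 := by
    nlinarith [norm_add_le (fourierCoeff a n) (fourierCoeff b n),
      sq_nonneg (‖fourierCoeff a n‖ - ‖fourierCoeff b n‖),
      norm_nonneg (fourierCoeff a n + fourierCoeff b n),
      norm_nonneg (fourierCoeff a n), norm_nonneg (fourierCoeff b n)]
  nlinarith [sq_nonneg ((n:ℝ)), h1]

lemma hardy_smul {a : Circ → ℂ} (c : ℂ) (ha : Hardy a) : Hardy (fun x => c * a x) := by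
  refine ⟨ha.1.const_mul c, fun n hn => ?_⟩
  rw [fourierCoeff_const_mul', ha.2 n hn, mul_zero]

lemma h1_smul {a : Circ → ℂ} (c : ℂ) (ha : H1 a) : H1 (fun x => c * a x) := by
  refine ⟨ha.1.const_mul c, ?_⟩
  refine ((ha.2.mul_left (‖c‖^2)).congr fun n => ?_)
  rw [fourierCoeff_const_mul', norm_mul, mul_pow]
  ring

lemma good_sum (m : ℕ) (c : ℕ → ℂ) (F : ℕ → Circ → ℂ)
    (hF : ∀ j, Hardy (F j)) (hF1 : ∀ j, H1 (F j)) :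
    Hardy (fun x => ∑ j ∈ Finset.range m, c j * F j x)
      ∧ H1 (fun x => ∑ j ∈ Finset.range m, c j * F j x) := by
  induction m with
  | zero => simpa using ⟨hardy_zero, h1_zero⟩
  | succ m ih =>
    have hfun : (fun x => ∑ j ∈ Finset.range (m+1), c j * F j x)
        = fun x => (∑ j ∈ Finset.range m, c j * F j x) + c m * F m x := by
      funext x
      rw [Finset.sum_range_succ]
    rw [hfun]
    exact ⟨hardy_add ih.1 (hardy_smul _ (hF m)), h1_add ih.2 (h1_smul _ (hF1 m))⟩

/-! ### Shift lemmas -/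

lemma coeff_shift (g : Circ → ℂ) (n : ℤ) :
    fourierCoeff (shift g) n = fourierCoeff g (n - 1) :=
  fourierCoeff_fourier_mul g 1 n

lemma hardy_shift {g : Circ → ℂ} (hg : Hardy g) : Hardy (shift g) := by
  refine ⟨memLp_fourier_mul hg.1 1, fun n hn => ?_⟩
  rw [coeff_shift, hg.2 (n-1) (by omega)]

lemma h1_shift {g : Circ → ℂ} (hg : H1 g) : H1 (shift g) := by
  refine ⟨memLp_fourier_mul hg.1 1, ?_⟩
  have hs : Summable (fun m : ℤ => ((m:ℝ)+1)^2 * ‖fourierCoeff g m‖^2) := by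
    refine Summable.of_nonneg_of_le (fun m => by positivity) (fun m => ?_)
      ((hg.2.mul_left 2).add ((summable_norm_sq_coeff hg.1).mul_left 2))
    have h1 : ((m:ℝ)+1)^2 ≤ 2*(m:ℝ)^2 + 2 := by nlinarith [sq_nonneg ((m:ℝ)-1)]
    nlinarith [sq_nonneg ‖fourierCoeff g m‖, norm_nonneg (fourierCoeff g m),
      mul_le_mul_of_nonneg_right h1 (sq_nonneg ‖fourierCoeff g m‖)]
  have := ((Equiv.subRight (1:ℤ)).hasSum_iff (f := fun m : ℤ => ((m:ℝ)+1)^2 * ‖fourierCoeff g m‖^2)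
    (a := ∑' m : ℤ, ((m:ℝ)+1)^2 * ‖fourierCoeff g m‖^2)).mpr hs.hasSum
  refine this.summable.congr fun n => ?_
  have he : (Equiv.subRight (1:ℤ)) n = n - 1 := rfl
  simp only [Function.comp_apply, he]
  rw [coeff_shift]
  push_cast
  ring_nf

lemma deshift_shift (h : Circ → ℂ) : shift (fun x => fourier (-1) x * h x) = h := by
  funext x
  show fourier 1 x * (fourier (-1) x * h x) = h x
  rw [← mul_assoc, ← fourier_add]
  norm_num

lemma coeff_deshift (h : Circ → ℂ) (n : ℤ) :
    fourierCoeff (fun x => fourier (-1) x * h x) n = fourierCoeff h (n + 1) := by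
  rw [fourierCoeff_fourier_mul h (-1) n]
  norm_num

lemma good_deshift {h : Circ → ℂ} (hH : Hardy h) (h1 : H1 h) (h0 : fourierCoeff h 0 = 0) :
    Hardy (fun x => fourier (-1) x * h x) ∧ H1 (fun x => fourier (-1) x * h x) := by
  constructor
  · refine ⟨memLp_fourier_mul hH.1 (-1), fun n hn => ?_⟩
    rw [coeff_deshift]
    rcases eq_or_lt_of_le (by omega : n + 1 ≤ 0) with he | hlt
    · rw [he, h0]
    · exact hH.2 _ hlt
  · refine ⟨memLp_fourier_mul hH.1 (-1), ?_⟩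
    have hs : Summable (fun m : ℤ => ((m:ℝ)-1)^2 * ‖fourierCoeff h m‖^2) := by
      refine Summable.of_nonneg_of_le (fun m => by positivity) (fun m => ?_)
        ((h1.2.mul_left 2).add ((summable_norm_sq_coeff hH.1).mul_left 2))
      have hb : ((m:ℝ)-1)^2 ≤ 2*(m:ℝ)^2 + 2 := by nlinarith [sq_nonneg ((m:ℝ)+1)]
      nlinarith [sq_nonneg ‖fourierCoeff h m‖, norm_nonneg (fourierCoeff h m),
        mul_le_mul_of_nonneg_right hb (sq_nonneg ‖fourierCoeff h m‖)]
    have := ((Equiv.addRight (1:ℤ)).hasSum_iff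
      (f := fun m : ℤ => ((m:ℝ)-1)^2 * ‖fourierCoeff h m‖^2)
      (a := ∑' m : ℤ, ((m:ℝ)-1)^2 * ‖fourierCoeff h m‖^2)).mpr hs.hasSum
    refine this.summable.congr fun n => ?_
    have he : (Equiv.addRight (1:ℤ)) n = n + 1 := rfl
    simp only [Function.comp_apply, he]
    rw [coeff_deshift]
    push_cast
    ring_nf

lemma ip_shift_shift (a b : Circ → ℂ) : ip (shift a) (shift b) = ip a b := by
  refine integral_congr_ae (Filter.Eventually.of_forall fun x => ?_)
  show fourier 1 x * a x * (starRingEnd ℂ) (fourier 1 x * b x) = a x * (starRingEnd ℂ) (b x)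
  rw [map_mul, ← fourier_neg]
  have h1 : fourier (1:ℤ) x * fourier (-1:ℤ) x = 1 := by
    rw [← fourier_add]
    norm_num
  calc fourier 1 x * a x * (fourier (-1) x * (starRingEnd ℂ) (b x))
      = (fourier (1:ℤ) x * fourier (-1:ℤ) x) * (a x * (starRingEnd ℂ) (b x)) := by ring
    _ = a x * (starRingEnd ℂ) (b x) := by rw [h1, one_mul]

/-! ### The commutation identity `Q(Sg) = Q(g) + ‖g‖²` -/

section QShift

variable {P D : (Circ → ℂ) → Circ → ℂ} {u : Circ → ℝ}
variable (hP : IsSzego P) (hD : IsD D) (hu : MemLp (fun x => (u x:ℂ)) 2 μ)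

include hP hu in
lemma ip_Toep_eq {a b : Circ → ℂ} (ha : H1 a) (hbH : Hardy b) :
    ip (Toep P u a) b = ip (fun x => (u x:ℂ) * a x) b := by
  refine HasSum.unique (hasSum_ip (memLp_Toep hP hu ha) hbH.1) ?_
  refine (hasSum_ip (memLp_symbol_mul hu ha) hbH.1).congr_fun fun n => ?_
  rw [coeff_Toep hP hu ha n]
  by_cases h : 0 ≤ n
  · rw [if_pos h]
  · rw [if_neg h, hbH.2 n (by omega), map_zero, mul_zero, mul_zero]

include hP hD hu in
lemma q_shift {g : Circ → ℂ} (hgH : Hardy g) (hg1 : H1 g) :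
    ip (Lax P D u (shift g)) (shift g) = ip (Lax P D u g) g + ip g g := by
  have hsH := hardy_shift hgH
  have hs1 := h1_shift hg1
  -- D part
  have hDpart : ip (D (shift g)) (shift g) = ip (D g) g + ip g g := by
    have hA := hasSum_ip (hD g hg1).1 hg1.1
    have hB := hasSum_ip hg1.1 hg1.1
    have hAB := hA.add hB
    have hw : HasSum (fun m : ℤ => ((m:ℂ)+1) * (fourierCoeff g m
        * (starRingEnd ℂ) (fourierCoeff g m))) (ip (D g) g + ip g g) := by
      refine hAB.congr_fun fun m => ?_
      rw [(hD g hg1).2 m]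
      ring
    refine HasSum.unique (hasSum_ip (hD _ hs1).1 hs1.1) ?_
    have hv := ((Equiv.subRight (1:ℤ)).hasSum_iff
      (f := fun m : ℤ => ((m:ℂ)+1) * (fourierCoeff g m * (starRingEnd ℂ) (fourierCoeff g m)))
      (a := ip (D g) g + ip g g)).mpr hw
    refine hv.congr_fun fun n => ?_
    have he : (Equiv.subRight (1:ℤ)) n = n - 1 := rfl
    simp only [Function.comp_apply, he]
    rw [(hD _ hs1).2 n, coeff_shift]
    push_cast
    ring
  -- Toeplitz part
  have hTpart : ip (Toep P u (shift g)) (shift g) = ip (Toep P u g) g := by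
    rw [ip_Toep_eq hP hu hs1 hsH, ip_Toep_eq hP hu hg1 hgH]
    refine integral_congr_ae (Filter.Eventually.of_forall fun x => ?_)
    show (u x:ℂ) * (fourier 1 x * g x) * (starRingEnd ℂ) (fourier 1 x * g x)
        = (u x:ℂ) * g x * (starRingEnd ℂ) (g x)
    rw [map_mul, ← fourier_neg]
    have h1 : fourier (1:ℤ) x * fourier (-1:ℤ) x = 1 := by
      rw [← fourier_add]; norm_num
    calc (u x:ℂ) * (fourier 1 x * g x) * (fourier (-1) x * (starRingEnd ℂ) (g x))
        = (fourier (1:ℤ) x * fourier (-1:ℤ) x) * ((u x:ℂ) * g x * (starRingEnd ℂ) (g x)) := by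
          ring
      _ = (u x:ℂ) * g x * (starRingEnd ℂ) (g x) := by rw [h1, one_mul]
  have hLs : ip (Lax P D u (shift g)) (shift g)
      = ip (D (shift g)) (shift g) - ip (Toep P u (shift g)) (shift g) :=
    ip_sub_left (hD _ hs1).1 (memLp_Toep hP hu hs1) hs1.1
  have hLg : ip (Lax P D u g) g = ip (D g) g - ip (Toep P u g) g :=
    ip_sub_left (hD g hg1).1 (memLp_Toep hP hu hg1) hg1.1
  rw [hLs, hLg, hDpart, hTpart]
  ring

end QShift

/-! ### Linear algebra: a nonzero vector in the kernel -/

lemma exists_kernel_vec (k m : ℕ) (hk : k < m) (M : Matrix (Fin k) (Fin m) ℂ) :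
    ∃ c : Fin m → ℂ, c ≠ 0 ∧ ∀ i, ∑ j, M i j * c j = 0 := by
  have hker : LinearMap.ker M.mulVecLin ≠ ⊥ := by
    intro hbot
    have hinj : Function.Injective M.mulVecLin := LinearMap.ker_eq_bot.mp hbot
    have hle := LinearMap.finrank_le_finrank_of_injective hinj
    rw [Module.finrank_fin_fun, Module.finrank_fin_fun] at hle
    omega
  obtain ⟨c, hc, hc0⟩ := Submodule.ne_bot_iff _ |>.mp hker
  refine ⟨c, hc0, fun i => ?_⟩
  have h0 : M.mulVec c = 0 := LinearMap.mem_ker.mp hc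
  have := congrFun h0 i
  simpa [Matrix.mulVec, dotProduct] using this

/-- For real `u ∈ L²`, the eigenvalues `λ₀(u) ≤ λ₁(u) ≤ ⋯` of the Lax
operator `L_u` (listed in increasing order with multiplicities) satisfy
`λ_{n+1}(u) ≥ λ_n(u) + 1`; in particular all eigenvalues of `L_u` are simple. -/
theorem eigenvalue_gap (P D : (Circ → ℂ) → Circ → ℂ)
    (hP : IsSzego P) (hD : IsD D)
    (u : Circ → ℝ) (hu : MemLp (fun x => (u x : ℂ)) 2 μ)
    (lam : ℕ → ℝ) (f : ℕ → Circ → ℂ) (hsys : EigenSystem P D u lam f) :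
    (∀ n : ℕ, lam n + 1 ≤ lam (n + 1)) ∧ StrictMono lam := by
  have key : ∀ n : ℕ, lam n + 1 ≤ lam (n + 1) := by
    intro n
    classical
    have hHF : ∀ j, Hardy (f j) := hsys.hardy
    have hSF : ∀ j, H1 (f j) := hsys.sobolev
    set M : Matrix (Fin (n+1)) (Fin (n+2)) ℂ := fun i j =>
      if (i : ℕ) = 0 then fourierCoeff (f (j:ℕ)) 0
      else ip (f (j:ℕ)) (shift (f ((i:ℕ) - 1))) with hM
    obtain ⟨c, hcne, hker⟩ := exists_kernel_vec (n+1) (n+2) (by omega) M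
    set c' : ℕ → ℂ := fun j => if hj : j < n + 2 then c ⟨j, hj⟩ else 0 with hc'
    set h : Circ → ℂ := fun x => ∑ j ∈ Finset.range (n+2), c' j * f j x with hh
    obtain ⟨hhH, hh1⟩ := good_sum (n+2) c' f hHF hSF
    rw [← hh] at hhH hh1
    have convert_sum : ∀ X : ℕ → ℂ,
        ∑ j ∈ Finset.range (n+2), c' j * X j = ∑ j : Fin (n+2), c j * X (j:ℕ) := by
      intro X
      rw [← Fin.sum_univ_eq_sum_range (fun j => c' j * X j) (n+2)]
      refine Finset.sum_congr rfl fun j _ => ?_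
      have hcj : c' (j:ℕ) = c j := by
        rw [hc']
        simp [j.isLt]
      rw [hcj]
    -- the zeroth Fourier coefficient of h vanishes
    have coeff0 : fourierCoeff h 0 = 0 := by
      rw [hh, fourierCoeff_finset_sum _ _ _ (fun j => (hHF j).1),
        convert_sum (fun j => fourierCoeff (f j) 0)]
      have := hker 0
      rw [← this]
      refine Finset.sum_congr rfl fun j _ => ?_
      rw [hM]
      simp [mul_comm]
    -- the coefficients of h in the eigenbasis
    have cj : ∀ k, ip h (f k) = c' k := by
      intro k
      rw [hh, ip_finset_sum_left _ _ _ (fun j => (hHF j).1) _ (hHF k).1]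
      have hterm : ∀ j, c' j * ip (f j) (f k) = if j = k then c' j else 0 := by
        intro j
        rw [hsys.ortho j k]
        by_cases hjk : j = k
        · rw [if_pos hjk, if_pos hjk, mul_one]
        · rw [if_neg hjk, if_neg hjk, mul_zero]
      rw [Finset.sum_congr rfl fun j _ => hterm j, Finset.sum_ite_eq' (Finset.range (n+2)) k c']
      by_cases hk : k < n + 2
      · rw [if_pos (Finset.mem_range.mpr hk)]
      · rw [if_neg (by simpa using hk), hc']
        simp [hk]
    -- the deshifted function g
    set g : Circ → ℂ := fun x => fourier (-1) x * h x with hgdef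
    obtain ⟨hgH, hg1⟩ := good_deshift hhH hh1 coeff0
    rw [← hgdef] at hgH hg1
    have hsg : shift g = h := by
      rw [hgdef]
      exact deshift_shift h
    -- coefficients of g
    have ckg : ∀ k, ip g (f k) = ∑ j ∈ Finset.range (n+2), c' j * ip (f j) (shift (f k)) := by
      intro k
      have step1 : ip g (f k) = ip h (shift (f k)) := by
        refine integral_congr_ae (Filter.Eventually.of_forall fun x => ?_)
        show (fourier (-1) x * h x) * (starRingEnd ℂ) (f k x)
            = h x * (starRingEnd ℂ) (fourier 1 x * f k x)
        rw [map_mul, ← fourier_neg]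
        ring
      rw [step1, hh, ip_finset_sum_left _ _ _ (fun j => (hHF j).1) _
        (hardy_shift (hHF k)).1]
    have ckg0 : ∀ k, k < n → ip g (f k) = 0 := by
      intro k hk
      rw [ckg k, convert_sum (fun j => ip (f j) (shift (f k)))]
      have := hker ⟨k+1, by omega⟩
      rw [← this]
      refine Finset.sum_congr rfl fun j _ => ?_
      have hMv : M ⟨k+1, by omega⟩ j = ip (f (j:ℕ)) (shift (f k)) := by
        rw [hM]
        simp
      rw [hMv, mul_comm]
    -- spectral sums
    obtain ⟨S1h, S2h⟩ := spectral_sums hP hD hu hsys hhH hh1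
    obtain ⟨S1g, S2g⟩ := spectral_sums hP hD hu hsys hgH hg1
    have S1h' : HasSum (fun j => lam j * ‖c' j‖^2) (ip (Lax P D u h) h).re :=
      S1h.congr_fun fun j => by rw [cj j]
    have S2h' : HasSum (fun j => ‖c' j‖^2) (ip h h).re :=
      S2h.congr_fun fun j => by rw [cj j]
    -- positivity of the norm of h
    obtain ⟨j0, hj0⟩ := Function.ne_iff.mp hcne
    have hj0' : c j0 ≠ 0 := by simpa using hj0
    have hc'j0 : c' (j0:ℕ) ≠ 0 := by
      rw [hc']
      simpa [j0.isLt] using hj0'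
    have hNpos : 0 < (ip h h).re := by
      have hle := le_hasSum S2h' (j0:ℕ) (fun i _ => by positivity)
      have hpos : (0:ℝ) < ‖c' (j0:ℕ)‖^2 := pow_pos (norm_pos_iff.mpr hc'j0) 2
      linarith
    -- upper bound on Q(h)
    have upper : (ip (Lax P D u h) h).re ≤ lam (n+1) * (ip h h).re := by
      refine hasSum_le (fun j => ?_) S1h' (S2h'.mul_left (lam (n+1)))
      by_cases hj : j ≤ n+1
      · exact mul_le_mul_of_nonneg_right (hsys.mono hj) (by positivity)
      · have hz : c' j = 0 := by
          rw [hc']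
          exact dif_neg (by omega)
        rw [hz]
        simp
    -- lower bound on Q(g)
    have lower : lam n * (ip g g).re ≤ (ip (Lax P D u g) g).re := by
      refine hasSum_le (fun j => ?_) (S2g.mul_left (lam n)) S1g
      by_cases hj : n ≤ j
      · exact mul_le_mul_of_nonneg_right (hsys.mono hj) (by positivity)
      · rw [ckg0 j (by omega)]
        simp
    -- the commutation identity
    have hQ : ip (Lax P D u h) h = ip (Lax P D u g) g + ip g g := by
      rw [← hsg]
      exact q_shift hP hD hu hgH hg1
    have hiph : ip h h = ip g g := by
      rw [← hsg, ip_shift_shift]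
    have hre : (ip (Lax P D u h) h).re = (ip (Lax P D u g) g).re + (ip g g).re := by
      rw [hQ, Complex.add_re]
    have hgN : (ip g g).re = (ip h h).re := by rw [hiph]
    have lower' : lam n * (ip h h).re ≤ (ip (Lax P D u g) g).re := by
      rw [← hgN]
      exact lower
    have hre' : (ip (Lax P D u h) h).re
        = (ip (Lax P D u g) g).re + (ip h h).re := by
      rw [hre, hgN]
    have final : (lam n + 1) * (ip h h).re ≤ lam (n+1) * (ip h h).re := by
      nlinarith [upper, lower', hre']
    exact le_of_mul_le_mul_right final hNpos
  exact ⟨key, strictMono_nat_of_lt_succ fun n => lt_of_lt_of_le (lt_add_one (lam n)) (key n)⟩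

end BO
end
end

section
/- For any v, w in L^∞ ∩ L^2_+ on the torus, the Toeplitz operators satisfy the commutator identity [T_v, T_{conj(w)}] = ⟨·|w⟩ v - H_v H_w, where H_v is the Hankel operator H_v(h) = Π(v conj(h)). -/
open MeasureTheory Complex Real

noncomputable section

namespace BO

/-- The (antilinear) Hankel operator `H_v(h) = Π(v conj h)`. -/
def Hank (P : (Circ → ℂ) → Circ → ℂ) (v h : Circ → ℂ) : Circ → ℂ :=
  P fun x => v x * (starRingEnd ℂ) (h x)

private lemma fc_def (f : Circ → ℂ) (n : ℤ) :
    fourierCoeff f n = ∫ x, fourier (-n) x * f x ∂μ := by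
  simp [fourierCoeff, smul_eq_mul]

private lemma fc_congr {f g : Circ → ℂ} (hfg : f =ᵐ[μ] g) (n : ℤ) :
    fourierCoeff f n = fourierCoeff g n := by
  rw [fc_def, fc_def]
  exact integral_congr_ae (hfg.mono fun x hx => by dsimp only; rw [hx])

private lemma memLp_conj {p : ENNReal} {f : Circ → ℂ} (hf : MemLp f p μ) :
    MemLp (fun x => (starRingEnd ℂ) (f x)) p μ :=
  hf.of_le (Complex.continuous_conj.comp_aestronglyMeasurable hf.1)
    (Filter.Eventually.of_forall fun x => by simp)

private lemma memLp_fourier (n : ℤ) : MemLp (fun x : Circ => (fourier n x : ℂ)) ⊤ μ :=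
  memLp_top_of_bound (fourier n).continuous.aestronglyMeasurable 1
    (Filter.Eventually.of_forall fun x => le_of_eq (Circle.norm_coe _))

private lemma memLp_mul_top {φ f : Circ → ℂ} (hφ : MemLp φ ⊤ μ) (hf : MemLp f 2 μ) :
    MemLp (fun x => φ x * f x) 2 μ := by
  exact hf.mul' hφ

private lemma integrable_fourier_mul {f : Circ → ℂ} (hf : MemLp f 2 μ) (n : ℤ) :
    Integrable (fun x => (fourier n x : ℂ) * f x) μ :=
  (hf.integrable (by norm_num)).bdd_mul (fourier n).continuous.aestronglyMeasurable
    (Filter.Eventually.of_forall fun x => le_of_eq (Circle.norm_coe _))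

private lemma fc_add (f g : Circ → ℂ) (hf : MemLp f 2 μ) (hg : MemLp g 2 μ) (n : ℤ) :
    fourierCoeff (fun x => f x + g x) n = fourierCoeff f n + fourierCoeff g n := by
  simp_rw [fc_def, mul_add]
  exact integral_add (integrable_fourier_mul hf (-n)) (integrable_fourier_mul hg (-n))

private lemma fc_sub (f g : Circ → ℂ) (hf : MemLp f 2 μ) (hg : MemLp g 2 μ) (n : ℤ) :
    fourierCoeff (fun x => f x - g x) n = fourierCoeff f n - fourierCoeff g n := by
  simp_rw [fc_def, mul_sub]
  exact integral_sub (integrable_fourier_mul hf (-n)) (integrable_fourier_mul hg (-n))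

private lemma fc_conj (f : Circ → ℂ) (n : ℤ) :
    fourierCoeff (fun x => (starRingEnd ℂ) (f x)) n = (starRingEnd ℂ) (fourierCoeff f (-n)) := by
  rw [fc_def, fc_def, ← integral_conj]
  congr 1
  funext x
  rw [map_mul, ← fourier_neg, neg_neg]

private lemma fc_fourier (m n : ℤ) :
    fourierCoeff (fun x : Circ => (fourier m x : ℂ)) n = if n = m then 1 else 0 := by
  classical
  have h1 : fourierCoeff ((fourierLp 2 m : Lp ℂ 2 μ) : Circ → ℂ) n
      = fourierCoeff (fun x : Circ => (fourier m x : ℂ)) n :=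
    fc_congr (coeFn_fourierLp 2 m) n
  rw [← h1, ← fourierBasis_repr]
  have h2 : (fourierBasis (T := 2 * π) m : Lp ℂ 2 μ) = fourierLp 2 m := by
    rw [coe_fourierBasis]
  rw [← h2, fourierBasis.repr_self, lp.single_apply]
  by_cases h : n = m
  · subst h; simp
  · rw [Pi.single_eq_of_ne h, if_neg h]

private lemma fc_const (c : ℂ) (n : ℤ) :
    fourierCoeff (fun _ : Circ => c) n = if n = 0 then c else 0 := by
  have h : (fun _ : Circ => c) = fun x : Circ => c * (fourier 0 x : ℂ) := by
    funext x; rw [fourier_zero, mul_one]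
  rw [h, fourierCoeff.const_mul, fc_fourier]
  split_ifs <;> simp

private lemma ae_eq_of_fc {f g : Circ → ℂ} (hf : MemLp f 2 μ) (hg : MemLp g 2 μ)
    (hc : ∀ n, fourierCoeff f n = fourierCoeff g n) : f =ᵐ[μ] g := by
  have hF : (hf.toLp f : Lp ℂ 2 μ) = hg.toLp g := by
    apply fourierBasis.repr.injective
    apply lp.ext
    funext n
    rw [fourierBasis_repr, fourierBasis_repr, fc_congr hf.coeFn_toLp n,
      fc_congr hg.coeFn_toLp n]
    exact hc n
  calc f =ᵐ[μ] hf.toLp f := hf.coeFn_toLp.symm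
    _ =ᵐ[μ] g := by rw [hF]; exact hg.coeFn_toLp


private lemma integral_mul_eq_zero {f g : Circ → ℂ} (hf : MemLp f 2 μ) (hg : MemLp g 2 μ)
    (hc : ∀ n : ℤ, fourierCoeff f (-n) * fourierCoeff g n = 0) :
    ∫ x, f x * g x ∂μ = 0 := by
  have hcf : MemLp (fun x => (starRingEnd ℂ) (f x)) 2 μ := memLp_conj hf
  set F : Lp ℂ 2 μ := hcf.toLp _ with hFdef
  set G : Lp ℂ 2 μ := hg.toLp g with hGdef
  have h1 : (inner ℂ F G : ℂ) = ∫ x, f x * g x ∂μ := by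
    rw [MeasureTheory.L2.inner_def]
    apply integral_congr_ae
    filter_upwards [hcf.coeFn_toLp, hg.coeFn_toLp] with x h1 h2
    rw [RCLike.inner_apply, h1, h2]
    simp [mul_comm]
  rw [← h1, ← fourierBasis.tsum_inner_mul_inner F G]
  have hterm : ∀ n : ℤ, (inner ℂ F (fourierBasis n) : ℂ) * inner ℂ (fourierBasis n) G = 0 := by
    intro n
    have hF' : (inner ℂ (fourierBasis n) F : ℂ) = fourierCoeff (fun x => (starRingEnd ℂ) (f x)) n := by
      rw [← fourierBasis.repr_apply_apply, fourierBasis_repr]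
      exact fc_congr hcf.coeFn_toLp n
    have hG' : (inner ℂ (fourierBasis n) G : ℂ) = fourierCoeff g n := by
      rw [← fourierBasis.repr_apply_apply, fourierBasis_repr]
      exact fc_congr hg.coeFn_toLp n
    have hFc : (inner ℂ F (fourierBasis n) : ℂ) = fourierCoeff f (-n) := by
      rw [← inner_conj_symm, hF', fc_conj]
      simp
    rw [hFc, hG', hc n]
  exact (tsum_congr hterm).trans tsum_zero


private lemma hardy_bdd_mul {v h : Circ → ℂ} (hv : Hardy v) (hvb : MemLp v ⊤ μ)
    (hh : Hardy h) : Hardy (fun x => v x * h x) := by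
  refine ⟨memLp_mul_top hvb hh.1, fun n hn => ?_⟩
  have hF : MemLp (fun x => (fourier (-n) x : ℂ) * v x) 2 μ :=
    memLp_mul_top (memLp_fourier (-n)) (hvb.mono_exponent le_top)
  rw [fc_def]
  have heq : (fun x => (fourier (-n) x : ℂ) * (v x * h x))
      = fun x => ((fourier (-n) x : ℂ) * v x) * h x := by
    funext x; ring
  rw [heq]
  apply integral_mul_eq_zero hF hh.1
  intro m
  have hfc : ∀ k : ℤ, fourierCoeff (fun x => (fourier (-n) x : ℂ) * v x) k
      = fourierCoeff v (k + n) := by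
    intro k
    rw [fc_def, fc_def]
    apply integral_congr_ae
    apply Filter.Eventually.of_forall
    intro x
    dsimp only
    rw [← mul_assoc, ← fourier_add]
    congr 2
    ring
  rcases lt_or_ge m 0 with hm | hm
  · rw [hh.2 m hm, mul_zero]
  · rw [hfc, hv.2 (-m + n) (by omega), zero_mul]

private lemma P_memLp {P : (Circ → ℂ) → Circ → ℂ} (hP : IsSzego P) {f : Circ → ℂ}
    (hf : MemLp f 2 μ) : MemLp (P f) 2 μ := (hP f hf).1

private lemma P_congr {P : (Circ → ℂ) → Circ → ℂ} (hP : IsSzego P) {f g : Circ → ℂ}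
    (hf : MemLp f 2 μ) (hg : MemLp g 2 μ) (hfg : f =ᵐ[μ] g) : P f =ᵐ[μ] P g :=
  ae_eq_of_fc (hP f hf).1 (hP g hg).1 fun n => by
    rw [(hP f hf).2 n, (hP g hg).2 n, fc_congr hfg n]

private lemma P_of_hardy {P : (Circ → ℂ) → Circ → ℂ} (hP : IsSzego P) {f : Circ → ℂ}
    (hf : Hardy f) : P f =ᵐ[μ] f :=
  ae_eq_of_fc (hP f hf.1).1 hf.1 fun n => by
    rw [(hP f hf.1).2 n]
    by_cases hn : 0 ≤ n
    · rw [if_pos hn]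
    · rw [if_neg hn, hf.2 n (by omega)]

private lemma szego_decomp {P : (Circ → ℂ) → Circ → ℂ} (hP : IsSzego P) {g : Circ → ℂ}
    (hg : MemLp g 2 μ) :
    P g =ᵐ[μ] fun x => g x - (starRingEnd ℂ) (P (fun y => (starRingEnd ℂ) (g y)) x)
      + fourierCoeff g 0 := by
  have hcg : MemLp (fun y => (starRingEnd ℂ) (g y)) 2 μ := memLp_conj hg
  have hk := hP _ hcg
  have hck : MemLp (fun x => (starRingEnd ℂ) (P (fun y => (starRingEnd ℂ) (g y)) x)) 2 μ :=
    memLp_conj hk.1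
  refine ae_eq_of_fc (hP g hg).1 ((hg.sub hck).add (memLp_const _)) fun n => ?_
  have h1 : fourierCoeff (fun x => g x
      - (starRingEnd ℂ) (P (fun y => (starRingEnd ℂ) (g y)) x) + fourierCoeff g 0) n
      = fourierCoeff g n - fourierCoeff (fun x =>
          (starRingEnd ℂ) (P (fun y => (starRingEnd ℂ) (g y)) x)) n
        + (if n = 0 then fourierCoeff g 0 else 0) := by
    rw [fc_add (fun x => g x - (starRingEnd ℂ) (P (fun y => (starRingEnd ℂ) (g y)) x))
      (fun _ => fourierCoeff g 0) (hg.sub hck) (memLp_const _),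
      fc_sub g (fun x => (starRingEnd ℂ) (P (fun y => (starRingEnd ℂ) (g y)) x)) hg hck, fc_const]
  rw [(hP g hg).2 n, h1, fc_conj, hk.2 (-n), fc_conj, neg_neg]
  by_cases hn : 0 ≤ n
  · rcases eq_or_lt_of_le hn with he | hl
    · rw [if_pos hn, ← he]
      simp
    · rw [if_pos hn, if_neg (by omega : ¬n = 0), if_neg (by omega : ¬(0:ℤ) ≤ -n)]
      simp
  · rw [if_neg hn, if_pos (by omega : (0:ℤ) ≤ -n), if_neg (by omega : ¬n = 0)]
    simp

private lemma P_lin {P : (Circ → ℂ) → Circ → ℂ} (hP : IsSzego P) {f1 f2 f3 : Circ → ℂ}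
    (h1 : MemLp f1 2 μ) (h2 : MemLp f2 2 μ) (h3 : MemLp f3 2 μ) :
    P (fun x => f1 x - f2 x + f3 x) =ᵐ[μ] fun x => P f1 x - P f2 x + P f3 x := by
  have hm : MemLp (fun x => f1 x - f2 x + f3 x) 2 μ := (h1.sub h2).add h3
  refine ae_eq_of_fc (hP _ hm).1 (((hP f1 h1).1.sub (hP f2 h2).1).add (hP f3 h3).1) fun n => ?_
  rw [(hP _ hm).2 n, fc_add (fun x => P f1 x - P f2 x) (P f3)
      ((hP f1 h1).1.sub (hP f2 h2).1) (hP f3 h3).1,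
    fc_sub (P f1) (P f2) (hP f1 h1).1 (hP f2 h2).1,
    fc_add (fun x => f1 x - f2 x) f3 (h1.sub h2) h3, fc_sub f1 f2 h1 h2,
    (hP f1 h1).2 n, (hP f2 h2).2 n, (hP f3 h3).2 n]
  split_ifs <;> simp

/-- For `v, w ∈ L^∞ ∩ L²₊`, the Toeplitz commutator identity
`[T_v, T_{conj w}] = ⟨·|w⟩v - H_v H_w` holds on the Hardy space. -/
theorem toeplitz_commutator (P : (Circ → ℂ) → Circ → ℂ) (hP : IsSzego P)
    (v w : Circ → ℂ) (hv : Hardy v) (hvb : MemLp v ⊤ μ)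
    (hw : Hardy w) (hwb : MemLp w ⊤ μ)
    (h : Circ → ℂ) (hh : Hardy h) :
    (fun x => P (fun y => v y * P (fun z => (starRingEnd ℂ) (w z) * h z) y) x
        - P (fun y => (starRingEnd ℂ) (w y) * P (fun z => v z * h z) y) x)
      =ᵐ[μ] fun x => ip h w * v x - Hank P v (Hank P w h) x := by
  classical
  have hwc : MemLp (fun z => (starRingEnd ℂ) (w z)) ⊤ μ := memLp_conj hwb
  have hg2 : MemLp (fun z => (starRingEnd ℂ) (w z) * h z) 2 μ := memLp_mul_top hwc hh.1
  have hvh : Hardy (fun z => v z * h z) := hardy_bdd_mul hv hvb hh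
  have hK2 : MemLp (Hank P w h) 2 μ :=
    P_memLp hP (memLp_mul_top hwb (memLp_conj hh.1))
  set c : ℂ := fourierCoeff (fun z => (starRingEnd ℂ) (w z) * h z) 0 with hc
  have hcip : c = ip h w := by
    rw [hc, fc_def]
    apply integral_congr_ae
    apply Filter.Eventually.of_forall
    intro x
    show (fourier (-0) x : ℂ) * ((starRingEnd ℂ) (w x) * h x) = h x * (starRingEnd ℂ) (w x)
    rw [neg_zero, fourier_zero, one_mul, mul_comm]
  have hconjg : (fun y => (starRingEnd ℂ) ((starRingEnd ℂ) (w y) * h y))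
      = fun y => w y * (starRingEnd ℂ) (h y) := by
    funext y
    rw [map_mul, Complex.conj_conj]
  -- decomposition of P g
  have hdec : P (fun z => (starRingEnd ℂ) (w z) * h z)
      =ᵐ[μ] fun x => ((starRingEnd ℂ) (w x) * h x) - (starRingEnd ℂ) (Hank P w h x) + c := by
    have h0 := szego_decomp hP hg2
    rw [hconjg] at h0
    exact h0
  -- first Toeplitz term
  have hf1 : MemLp (fun y => v y * ((starRingEnd ℂ) (w y) * h y)) 2 μ :=
    memLp_mul_top hvb hg2
  have hf2 : MemLp (fun y => v y * (starRingEnd ℂ) (Hank P w h y)) 2 μ :=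
    memLp_mul_top hvb (memLp_conj hK2)
  have hf3 : Hardy (fun y => c * v y) :=
    ⟨hv.1.const_mul c, fun n hn => by rw [fourierCoeff.const_mul, hv.2 n hn, mul_zero]⟩
  have hA : P (fun y => v y * P (fun z => (starRingEnd ℂ) (w z) * h z) y)
      =ᵐ[μ] fun x => P (fun y => v y * ((starRingEnd ℂ) (w y) * h y)) x
        - P (fun y => v y * (starRingEnd ℂ) (Hank P w h y)) x + c * v x := by
    have e1 : (fun y => v y * P (fun z => (starRingEnd ℂ) (w z) * h z) y)
        =ᵐ[μ] fun y => v y * (((starRingEnd ℂ) (w y) * h y)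
          - (starRingEnd ℂ) (Hank P w h y) + c) := by
      filter_upwards [hdec] with y hy
      rw [hy]
    have e2 : P (fun y => v y * P (fun z => (starRingEnd ℂ) (w z) * h z) y)
        =ᵐ[μ] P (fun y => v y * (((starRingEnd ℂ) (w y) * h y)
          - (starRingEnd ℂ) (Hank P w h y) + c)) :=
      P_congr hP (memLp_mul_top hvb (P_memLp hP hg2))
        (memLp_mul_top hvb ((hg2.sub (memLp_conj hK2)).add (memLp_const c))) e1
    have e3 : (fun y => v y * (((starRingEnd ℂ) (w y) * h y)
          - (starRingEnd ℂ) (Hank P w h y) + c))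
        = fun y => (v y * ((starRingEnd ℂ) (w y) * h y))
          - (v y * (starRingEnd ℂ) (Hank P w h y)) + (c * v y) := by
      funext y; ring
    rw [e3] at e2
    refine e2.trans ?_
    refine (P_lin hP hf1 hf2 hf3.1).trans ?_
    filter_upwards [P_of_hardy hP hf3] with x hx
    rw [hx]
  -- second Toeplitz term
  have hB : P (fun y => (starRingEnd ℂ) (w y) * P (fun z => v z * h z) y)
      =ᵐ[μ] P (fun y => v y * ((starRingEnd ℂ) (w y) * h y)) := by
    have e1 : (fun y => (starRingEnd ℂ) (w y) * P (fun z => v z * h z) y)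
        =ᵐ[μ] fun y => (starRingEnd ℂ) (w y) * (v y * h y) := by
      filter_upwards [P_of_hardy hP hvh] with y hy
      rw [hy]
    have e2 := P_congr hP (memLp_mul_top hwc (P_memLp hP hvh.1))
      (memLp_mul_top hwc (memLp_mul_top hvb hh.1)) e1
    refine e2.trans ?_
    have e3 : (fun y => (starRingEnd ℂ) (w y) * (v y * h y))
        = fun y => v y * ((starRingEnd ℂ) (w y) * h y) := by
      funext y; ring
    rw [e3]
  filter_upwards [hA, hB] with x h1 h2
  rw [h1, h2, ← hcip]
  show _ = c * v x - P (fun y => v y * (starRingEnd ℂ) (Hank P w h y)) x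
  ring

end BO
end
end

section
/- Let A : H^1_+ → L^2_+ be a positive selfadjoint operator such that A and S*AS are invertible and A^{-1} is positive. Then (S*AS)^{-1} = S*A^{-1}S - ⟨·|S*A^{-1}1⟩ S*A^{-1}1 / ⟨A^{-1}1|1⟩. -/
open scoped InnerProductSpace

noncomputable section

/-- Let `A` be a positive symmetric operator such that `A` and `S*AS`
are invertible (with inverses `B` and `C` respectively) and `A⁻¹ = B` is positive, where
`S` is an isometry with `S*S = Id`, `SS* = Id - ⟨·|e⟩e` and `S*e = 0` for a unit vector
`e` (the constant function `1` on the Hardy space).  Then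
`(S*AS)⁻¹ = S*A⁻¹S - ⟨·|S*A⁻¹e⟩ S*A⁻¹e / ⟨A⁻¹e|e⟩`.
(Here `⟨x|y⟩` denotes the inner product which is conjugate-linear in `y`, i.e.
`⟨x|y⟩ = ⟪y, x⟫` in Mathlib's convention.) -/
theorem inverse_of_conjugated_operator
    {E : Type*} [NormedAddCommGroup E] [InnerProductSpace ℂ E] [CompleteSpace E]
    (e : E) (he : ‖e‖ = 1)
    (S : E →L[ℂ] E) (A B C : E →ₗ[ℂ] E)
    (hS1 : ∀ x, ContinuousLinearMap.adjoint S (S x) = x)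
    (hS2 : ∀ x, S (ContinuousLinearMap.adjoint S x) = x - (inner ℂ e x : ℂ) • e)
    (hSe : ContinuousLinearMap.adjoint S e = 0)
    (hAsym : ∀ x y, (inner ℂ (A x) y : ℂ) = inner ℂ x (A y))
    (hApos : ∀ x, 0 ≤ (inner ℂ x (A x) : ℂ).re)
    (hAB : ∀ x, A (B x) = x) (hBA : ∀ x, B (A x) = x)
    (hBpos : ∀ x, 0 ≤ (inner ℂ x (B x) : ℂ).re)
    (hC1 : ∀ x, ContinuousLinearMap.adjoint S (A (S (C x))) = x)
    (hC2 : ∀ x, C (ContinuousLinearMap.adjoint S (A (S x))) = x) :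
    ∀ x, C x = ContinuousLinearMap.adjoint S (B (S x)) -
      ((inner ℂ (ContinuousLinearMap.adjoint S (B e)) x : ℂ) / (inner ℂ e (B e) : ℂ)) •
        ContinuousLinearMap.adjoint S (B e) := by
  set S' := ContinuousLinearMap.adjoint S with hS'
  -- B is symmetric
  have hBsym : ∀ x y, (inner ℂ (B x) y : ℂ) = inner ℂ x (B y) := by
    intro x y
    calc (inner ℂ (B x) y : ℂ) = inner ℂ (B x) (A (B y)) := by rw [hAB]
    _ = inner ℂ (A (B x)) (B y) := (hAsym _ _).symm
    _ = inner ℂ x (B y) := by rw [hAB]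
  have hee : (inner ℂ e e : ℂ) = 1 := by
    rw [inner_self_eq_norm_sq_to_K, he]; norm_num
  -- ⟪e, B e⟫ ≠ 0
  have hne : (inner ℂ e (B e) : ℂ) ≠ 0 := by
    intro h0
    have hAf : A (B e) = e := hAB e
    have hfAf : (inner ℂ (B e) (A (B e)) : ℂ) = 0 := by
      rw [hAf]
      rw [hBsym]
      exact h0
    set r : ℝ := (inner ℂ e (A e) : ℂ).re with hr
    have hrpos : 0 ≤ r := hApos e
    have key : ∀ t : ℝ, 0 ≤ 2 * t + t ^ 2 * r := by
      intro t
      have hpos := hApos (B e + (t : ℂ) • e)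
      have h1 : (inner ℂ (B e) (A e) : ℂ) = 1 := by rw [← hAsym, hAf, hee]
      have h2 : (inner ℂ e (A (B e)) : ℂ) = 1 := by rw [hAf, hee]
      have hx : (inner ℂ (B e + (t : ℂ) • e) (A (B e + (t : ℂ) • e)) : ℂ)
          = 2 * (t : ℂ) + (t : ℂ) ^ 2 * (inner ℂ e (A e) : ℂ) := by
        rw [map_add, map_smul]
        simp only [inner_add_left, inner_add_right, inner_smul_left, inner_smul_right,
          Complex.conj_ofReal]
        rw [hfAf, h1, h2]
        ring
      rw [hx] at hpos
      simpa [Complex.add_re, Complex.mul_re, ← Complex.ofReal_pow, Complex.ofReal_re, Complex.ofReal_im] using hpos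
    have hr1 : (0:ℝ) < r + 1 := by linarith
    have ht := key (-(1/(r+1)))
    have heq : 2 * (-(1/(r+1))) + (-(1/(r+1)))^2 * r = (-(r+2))/(r+1)^2 := by
      field_simp; ring
    rw [heq] at ht
    have h2 : (0:ℝ) < (r+1)^2 := by positivity
    rw [le_div_iff₀ h2] at ht
    nlinarith
  intro x
  set c : ℂ := (inner ℂ (S' (B e)) x : ℂ) / (inner ℂ e (B e) : ℂ) with hc
  set y := S' (B (S x)) - c • S' (B e) with hy
  have hcc : c * (inner ℂ e (B e) : ℂ) = inner ℂ e (B (S x)) := by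
    rw [hc, div_mul_cancel₀ _ hne, hS', ContinuousLinearMap.adjoint_inner_left, ← hBsym]
  suffices h : S' (A (S y)) = x by
    calc C x = C (S' (A (S y))) := by rw [h]
    _ = y := hC2 y
  have hSy : S y = B (S x) - (inner ℂ e (B (S x)) : ℂ) • e - c • (B e)
      + (c * (inner ℂ e (B e) : ℂ)) • e := by
    rw [hy, map_sub, map_smul, hS2, hS2, smul_sub, smul_smul]
    abel
  have hASy : A (S y) = S x - (inner ℂ e (B (S x)) : ℂ) • (A e) - c • e
      + (c * (inner ℂ e (B e) : ℂ)) • (A e) := by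
    rw [hSy, map_add, map_sub, map_sub, map_smul, map_smul, map_smul, hAB, hAB]
  rw [hASy, map_add, map_sub, map_sub, map_smul, map_smul, map_smul, hS1, hSe, hcc]
  simp
end
end

section
/- For every ε > 0, every real-valued u in L^2(T), and every f in H^1(R), one has ∫_R |u(x)f(x)|² dx ≤ ‖u‖² (ε‖f'‖²_{L²(R)} + (1 + 1/ε)‖f‖²_{L²(R)}), where ‖u‖² = ∫_0^{2π}|u(x)|² dx; in particular multiplication by a periodic L² function is relatively bounded with respect to d/dx with relative bound zero. -/
open MeasureTheory Set
open scoped ENNReal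

noncomputable section

lemma aux_hasDerivAt_sq_norm (f : ℝ → ℂ) (hfd : Differentiable ℝ f) (t : ℝ) :
    HasDerivAt (fun s => ‖f s‖ ^ 2)
      (2 * (f t).re * (deriv f t).re + 2 * (f t).im * (deriv f t).im) t := by
  have hf := (hfd t).hasDerivAt
  have hre : HasDerivAt (fun s => (f s).re) ((deriv f t).re) t :=
    (Complex.reCLM.hasFDerivAt.comp_hasDerivAt t hf)
  have him : HasDerivAt (fun s => (f s).im) ((deriv f t).im) t :=
    (Complex.imCLM.hasFDerivAt.comp_hasDerivAt t hf)
  have h : HasDerivAt (fun s => (f s).re ^ 2 + (f s).im ^ 2)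
      (2 * (f t).re * (deriv f t).re + 2 * (f t).im * (deriv f t).im) t := by
    have h1 := (hre.mul hre).add (him.mul him)
    have e1 : (fun s => (f s).re ^ 2 + (f s).im ^ 2) = ((fun s => (f s).re) * fun s => (f s).re) + (fun s => (f s).im) * fun s => (f s).im := by
      ext s; simp only [Pi.add_apply, Pi.mul_apply]; ring
    rw [e1]; exact h1.congr_deriv (by ring)
  have e2 : (fun s => ‖f s‖ ^ 2) = fun s => (f s).re ^ 2 + (f s).im ^ 2 := by
    ext s; rw [Complex.sq_norm, Complex.normSq_apply]; ring
  rw [e2]; exact h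

lemma aux_abs_bound (ε a b c d : ℝ) (hε : 0 < ε) :
    |2 * a * c + 2 * b * d| ≤ ε * (c ^ 2 + d ^ 2) + (1 / ε) * (a ^ 2 + b ^ 2) := by
  have hε' : ε * (1 / ε) = 1 := mul_one_div_cancel hε.ne'
  rw [abs_le]
  constructor <;>
    nlinarith [sq_nonneg (ε * c - a), sq_nonneg (ε * d - b), sq_nonneg (ε * c + a),
      sq_nonneg (ε * d + b), mul_pos hε hε, hε.le, sq_nonneg a, sq_nonneg b]

lemma aux_interval_bound (f : ℝ → ℂ) (hfd : Differentiable ℝ f)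
    (ε : ℝ) (hε : 0 < ε) (a L : ℝ) (hL : 0 < L)
    (hI2 : IntegrableOn (fun x => ‖f x‖ ^ 2) (Set.Ioc a (a + L)) volume)
    (hI'2 : IntegrableOn (fun x => ‖deriv f x‖ ^ 2) (Set.Ioc a (a + L)) volume)
    (y : ℝ) (hy : y ∈ Set.Icc a (a + L)) :
    ‖f y‖ ^ 2 ≤ (1 / L) * (∫ x in Set.Ioc a (a + L), ‖f x‖ ^ 2)
      + ∫ x in Set.Ioc a (a + L), (ε * ‖deriv f x‖ ^ 2 + (1 / ε) * ‖f x‖ ^ 2) := by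
  set I := Set.Ioc a (a + L) with hI
  set g : ℝ → ℝ := fun t => ‖f t‖ ^ 2 with hgdef
  set D : ℝ → ℝ := fun t =>
    2 * (f t).re * (deriv f t).re + 2 * (f t).im * (deriv f t).im with hDdef
  have hg : ∀ t, HasDerivAt g (D t) t := fun t => aux_hasDerivAt_sq_norm f hfd t
  have hDb : ∀ t, |D t| ≤ ε * ‖deriv f t‖ ^ 2 + (1 / ε) * ‖f t‖ ^ 2 := by
    intro t
    have := aux_abs_bound ε (f t).re (f t).im (deriv f t).re (deriv f t).im hε
    simp only [Complex.sq_norm, Complex.normSq_apply, D]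
    convert this using 2 <;> ring
  -- measurability
  have hfm : Measurable f := hfd.continuous.measurable
  have hf'm : Measurable (deriv f) := measurable_deriv f
  have hDm : Measurable D := by
    fun_prop
  -- integrable bound
  have hbound_int : IntegrableOn
      (fun t => ε * ‖deriv f t‖ ^ 2 + (1 / ε) * ‖f t‖ ^ 2) I volume :=
    (hI'2.const_mul ε).add (hI2.const_mul (1 / ε))
  have hD_int : IntegrableOn D I volume := by
    refine hbound_int.mono' hDm.aestronglyMeasurable.restrict ?_
    exact Filter.Eventually.of_forall fun t => by
      simpa [Real.norm_eq_abs] using hDb t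
  have hgc : Continuous g := (hfd.continuous.norm.pow 2)
  obtain ⟨z, hz, hzmin⟩ := (isCompact_Icc (a := a) (b := a + L)).exists_isMinOn
    ⟨a, Set.mem_Icc.mpr ⟨le_refl a, by linarith⟩⟩ hgc.continuousOn
  -- g z ≤ (1/L) * ∫ g
  have hgz : g z ≤ (1 / L) * ∫ x in I, g x := by
    have h1 : g z * (volume I).toReal ≤ ∫ x in I, g x :=
      setIntegral_ge_of_const_le_real measurableSet_Ioc
        (by exact (measure_Ioc_lt_top).ne)
        (fun x hx => hzmin (Set.Ioc_subset_Icc_self hx)) hI2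
    have h2 : (volume I).toReal = L := by
      rw [hI, Real.volume_Ioc]
      simp [ENNReal.toReal_ofReal hL.le]
    rw [h2] at h1
    rw [one_div, ← div_eq_inv_mul, le_div_iff₀ hL]
    exact h1
  -- FTC from z to y
  have hsub : Set.uIoc z y ⊆ I := by
    rw [Set.uIoc, hI]
    exact Set.Ioc_subset_Ioc (le_min hz.1 hy.1) (max_le hz.2 hy.2)
  have hIIzy : IntervalIntegrable D volume z y :=
    intervalIntegrable_iff.mpr (hD_int.mono_set hsub)
  have hftc : ∫ t in z..y, D t = g y - g z :=
    intervalIntegral.integral_eq_sub_of_hasDerivAt (fun t _ => hg t) hIIzy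
  have habs : |∫ t in z..y, D t| ≤
      ∫ x in I, (ε * ‖deriv f x‖ ^ 2 + (1 / ε) * ‖f x‖ ^ 2) := by
    calc |∫ t in z..y, D t| ≤ ∫ t in Set.uIoc z y, |D t| := by
          simpa [Real.norm_eq_abs] using
            intervalIntegral.norm_integral_le_integral_norm_uIoc (f := D) (a := z) (b := y)
      _ ≤ ∫ x in I, |D x| := by
          refine setIntegral_mono_set hD_int.abs ?_ (Filter.Eventually.of_forall hsub)
          exact Filter.Eventually.of_forall fun t => abs_nonneg _
      _ ≤ ∫ x in I, (ε * ‖deriv f x‖ ^ 2 + (1 / ε) * ‖f x‖ ^ 2) := by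
          refine setIntegral_mono_on hD_int.abs hbound_int measurableSet_Ioc ?_
          exact fun x _ => hDb x
  have : g y = g z + ∫ t in z..y, D t := by rw [hftc]; ring
  calc g y = g z + ∫ t in z..y, D t := this
    _ ≤ (1 / L) * (∫ x in I, g x) + |∫ t in z..y, D t| :=
        add_le_add hgz (le_abs_self _)
    _ ≤ (1 / L) * (∫ x in I, g x)
        + ∫ x in I, (ε * ‖deriv f x‖ ^ 2 + (1 / ε) * ‖f x‖ ^ 2) :=
        add_le_add le_rfl habs

lemma aux_sum (T : ℝ) (hT : 0 < T) (W : ℝ → ℝ≥0∞) :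
    ∑' n : ℤ, ∫⁻ x in Set.Ioc ((n : ℝ) * T) ((n : ℝ) * T + T), W x = ∫⁻ x, W x := by
  have hcover : ⋃ n : ℤ, Set.Ioc ((n : ℝ) * T) ((n : ℝ) * T + T) = Set.univ := by
    have h := iUnion_Ioc_add_zsmul hT (0 : ℝ)
    simpa [zsmul_eq_mul, add_mul, one_mul, add_comm, add_assoc] using h
  have hdisj : Pairwise (Function.onFun Disjoint
      fun n : ℤ => Set.Ioc ((n : ℝ) * T) ((n : ℝ) * T + T)) := by
    have h := pairwise_disjoint_Ioc_add_zsmul (0 : ℝ) T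
    simpa [Function.onFun, zsmul_eq_mul, add_mul, one_mul, add_comm, add_assoc] using h
  rw [← lintegral_iUnion (fun n => measurableSet_Ioc) hdisj, hcover,
    Measure.restrict_univ]

lemma aux_shift (T : ℝ) (n : ℤ) (W : ℝ → ℝ≥0∞) :
    ∫⁻ x in Set.Ioc ((n : ℝ) * T) ((n : ℝ) * T + T), W x
      = ∫⁻ x in Set.Ioc 0 T, W (x + (n : ℝ) * T) := by
  have h := (measurePreserving_add_right volume ((n : ℝ) * T)).setLIntegral_comp_preimage_emb
    (measurableEmbedding_addRight ((n : ℝ) * T)) W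
    (Set.Ioc ((n : ℝ) * T) ((n : ℝ) * T + T))
  have hpre : (fun x => x + (n : ℝ) * T) ⁻¹' Set.Ioc ((n : ℝ) * T) ((n : ℝ) * T + T)
      = Set.Ioc 0 T := by
    ext x
    simp only [Set.mem_preimage, Set.mem_Ioc]
    constructor <;> intro hx <;> exact ⟨by linarith [hx.1], by linarith [hx.2]⟩
  rw [hpre] at h
  exact h.symm

/-- For every `ε > 0`, every `2π`-periodic real-valued `u` which is
square integrable over a period, and every `f ∈ H¹(ℝ)`,
`∫_ℝ |u f|² ≤ ‖u‖² (ε‖f'‖²_{L²(ℝ)} + (1 + 1/ε)‖f‖²_{L²(ℝ)})`,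
where `‖u‖² = ∫₀^{2π} |u|²`.  In particular multiplication by a periodic `L²` function
is relatively bounded with respect to `d/dx` with relative bound zero. -/
theorem periodic_multiplication_relative_bound
    (ε : ℝ) (hε : 0 < ε)
    (u : ℝ → ℝ) (hmeas : Measurable u)
    (hper : Function.Periodic u (2 * Real.pi))
    (huL2 : IntegrableOn (fun x => (u x) ^ 2) (Set.Ioc 0 (2 * Real.pi)) volume)
    (f : ℝ → ℂ) (hfd : Differentiable ℝ f)
    (hf2 : MemLp f 2 volume) (hf'2 : MemLp (deriv f) 2 volume) :
    (∫ x : ℝ, (u x) ^ 2 * ‖f x‖ ^ 2) ≤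
      (∫ x in Set.Ioc 0 (2 * Real.pi), (u x) ^ 2) *
        (ε * (∫ x : ℝ, ‖deriv f x‖ ^ 2) + (1 + 1 / ε) * (∫ x : ℝ, ‖f x‖ ^ 2)) := by
  have hπ := Real.pi_gt_three
  set T : ℝ := 2 * Real.pi with hTdef
  have hT : 0 < T := by positivity
  have hT1 : 1 ≤ T := by simp only [hTdef]; linarith
  have hfm : Measurable f := hfd.continuous.measurable
  have hf'm : Measurable (deriv f) := measurable_deriv f
  have hfint : Integrable (fun x => ‖f x‖ ^ 2) volume :=
    (memLp_two_iff_integrable_sq_norm hf2.aestronglyMeasurable).mp hf2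
  have hf'int : Integrable (fun x => ‖deriv f x‖ ^ 2) volume :=
    (memLp_two_iff_integrable_sq_norm hf'2.aestronglyMeasurable).mp hf'2
  set F : ℝ → ℝ≥0∞ := fun x => ENNReal.ofReal (‖f x‖ ^ 2) with hF
  set F' : ℝ → ℝ≥0∞ := fun x => ENNReal.ofReal (‖deriv f x‖ ^ 2) with hF'
  set U : ℝ → ℝ≥0∞ := fun x => ENNReal.ofReal (u x ^ 2) with hU
  have hFm : Measurable F := (hfm.norm.pow_const 2).ennreal_ofReal
  have hF'm : Measurable F' := (hf'm.norm.pow_const 2).ennreal_ofReal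
  have hUm : Measurable U := (hmeas.pow_const 2).ennreal_ofReal
  set L0 : ℝ≥0∞ := ∫⁻ x, F x with hL0
  set L1 : ℝ≥0∞ := ∫⁻ x, F' x with hL1
  have hL0eq : ENNReal.ofReal (∫ x, ‖f x‖ ^ 2) = L0 :=
    ofReal_integral_eq_lintegral_ofReal hfint
      (Filter.Eventually.of_forall fun x => sq_nonneg _)
  have hL1eq : ENNReal.ofReal (∫ x, ‖deriv f x‖ ^ 2) = L1 :=
    ofReal_integral_eq_lintegral_ofReal hf'int
      (Filter.Eventually.of_forall fun x => sq_nonneg _)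
  set M : ℝ≥0∞ := ENNReal.ofReal ε * L1 + ENNReal.ofReal (1 + 1 / ε) * L0 with hM
  -- pointwise claim
  have claim : ∀ x ∈ Set.Ioc (0 : ℝ) T, (∑' n : ℤ, F (x + (n : ℝ) * T)) ≤ M := by
    intro x hx
    set B : ℤ → ℝ≥0∞ := fun n =>
      ENNReal.ofReal (1 / T) * (∫⁻ y in Set.Ioc ((n : ℝ) * T) ((n : ℝ) * T + T), F y)
      + (ENNReal.ofReal ε * (∫⁻ y in Set.Ioc ((n : ℝ) * T) ((n : ℝ) * T + T), F' y)
        + ENNReal.ofReal (1 / ε) * (∫⁻ y in Set.Ioc ((n : ℝ) * T) ((n : ℝ) * T + T), F y))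
      with hB
    have hterm : ∀ n : ℤ, F (x + (n : ℝ) * T) ≤ B n := by
      intro n
      have hIf : IntegrableOn (fun y => ‖f y‖ ^ 2)
          (Set.Ioc ((n : ℝ) * T) ((n : ℝ) * T + T)) volume := hfint.integrableOn
      have hIf' : IntegrableOn (fun y => ‖deriv f y‖ ^ 2)
          (Set.Ioc ((n : ℝ) * T) ((n : ℝ) * T + T)) volume := hf'int.integrableOn
      have hy : x + (n : ℝ) * T ∈ Set.Icc ((n : ℝ) * T) ((n : ℝ) * T + T) :=
        ⟨by linarith [hx.1], by linarith [hx.2]⟩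
      have h := aux_interval_bound f hfd ε hε ((n : ℝ) * T) T hT hIf hIf'
        (x + (n : ℝ) * T) hy
      have h1 : F (x + (n : ℝ) * T) ≤ ENNReal.ofReal
          ((1 / T) * (∫ y in Set.Ioc ((n : ℝ) * T) ((n : ℝ) * T + T), ‖f y‖ ^ 2)
           + ∫ y in Set.Ioc ((n : ℝ) * T) ((n : ℝ) * T + T),
              (ε * ‖deriv f y‖ ^ 2 + (1 / ε) * ‖f y‖ ^ 2)) :=
        ENNReal.ofReal_le_ofReal h
      refine h1.trans (le_of_eq ?_)
      have hnn1 : (0:ℝ) ≤ (1 / T) * ∫ y in Set.Ioc ((n : ℝ) * T) ((n : ℝ) * T + T), ‖f y‖ ^ 2 :=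
        mul_nonneg (by positivity)
          (setIntegral_nonneg measurableSet_Ioc fun y _ => sq_nonneg _)
      rw [ENNReal.ofReal_add hnn1
        (setIntegral_nonneg measurableSet_Ioc fun y _ => by positivity)]
      congr 1
      · rw [ENNReal.ofReal_mul (by positivity),
          ofReal_integral_eq_lintegral_ofReal hIf
            (Filter.Eventually.of_forall fun y => sq_nonneg _)]
      · rw [integral_add (hIf'.const_mul ε) (hIf.const_mul (1/ε)),
          integral_const_mul, integral_const_mul,
          ENNReal.ofReal_add
            (mul_nonneg hε.le (setIntegral_nonneg measurableSet_Ioc fun y _ => sq_nonneg _))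
            (mul_nonneg (by positivity)
              (setIntegral_nonneg measurableSet_Ioc fun y _ => sq_nonneg _)),
          ENNReal.ofReal_mul hε.le, ENNReal.ofReal_mul (by positivity : (0:ℝ) ≤ 1/ε),
          ofReal_integral_eq_lintegral_ofReal hIf'
            (Filter.Eventually.of_forall fun y => sq_nonneg _),
          ofReal_integral_eq_lintegral_ofReal hIf
            (Filter.Eventually.of_forall fun y => sq_nonneg _)]
    calc (∑' n : ℤ, F (x + (n : ℝ) * T)) ≤ ∑' n, B n := ENNReal.tsum_le_tsum hterm
      _ = ENNReal.ofReal (1 / T) * L0 + (ENNReal.ofReal ε * L1 + ENNReal.ofReal (1 / ε) * L0) := by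
          rw [hB]
          rw [ENNReal.tsum_add, ENNReal.tsum_mul_left, ENNReal.tsum_add,
            ENNReal.tsum_mul_left, ENNReal.tsum_mul_left,
            aux_sum T hT F, aux_sum T hT F']
      _ ≤ M := by
          rw [hM, ENNReal.ofReal_add one_pos.le (by positivity : (0:ℝ) ≤ 1/ε),
            ENNReal.ofReal_one, add_mul, one_mul]
          calc ENNReal.ofReal (1 / T) * L0 + (ENNReal.ofReal ε * L1 + ENNReal.ofReal (1/ε) * L0)
              ≤ 1 * L0 + (ENNReal.ofReal ε * L1 + ENNReal.ofReal (1/ε) * L0) := by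
                gcongr
                exact ENNReal.ofReal_le_one.mpr (by rw [div_le_one hT]; exact hT1)
            _ = ENNReal.ofReal ε * L1 + (L0 + ENNReal.ofReal (1/ε) * L0) := by ring
  -- main lintegral bound
  have key : (∫⁻ x, U x * F x) ≤ (∫⁻ x in Set.Ioc 0 T, U x) * M := by
    calc (∫⁻ x, U x * F x)
        = ∑' n : ℤ, ∫⁻ x in Set.Ioc ((n : ℝ) * T) ((n : ℝ) * T + T), U x * F x :=
          (aux_sum T hT _).symm
      _ = ∑' n : ℤ, ∫⁻ x in Set.Ioc 0 T, U x * F (x + (n : ℝ) * T) := by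
          refine tsum_congr fun n => ?_
          rw [aux_shift T n (fun x => U x * F x)]
          refine lintegral_congr fun x => ?_
          have hUeq : U (x + (n : ℝ) * T) = U x := by
            simp only [hU]
            rw [hper.int_mul n x]
          rw [hUeq]
      _ = ∫⁻ x in Set.Ioc 0 T, ∑' n : ℤ, U x * F (x + (n : ℝ) * T) := by
          rw [← lintegral_tsum]
          exact fun n => (hUm.mul (hFm.comp (measurable_add_const _))).aemeasurable
      _ = ∫⁻ x in Set.Ioc 0 T, U x * ∑' n : ℤ, F (x + (n : ℝ) * T) := by
          exact lintegral_congr fun x => ENNReal.tsum_mul_left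
      _ ≤ ∫⁻ x in Set.Ioc 0 T, U x * M := by
          refine setLIntegral_mono (hUm.mul measurable_const) fun x hx => ?_
          exact mul_le_mul_right (claim x hx) (U x)
      _ = (∫⁻ x in Set.Ioc 0 T, U x) * M := lintegral_mul_const M hUm
  -- back to real integrals
  have hInn : 0 ≤ᵐ[volume] fun x => u x ^ 2 * ‖f x‖ ^ 2 :=
    Filter.Eventually.of_forall fun x => mul_nonneg (sq_nonneg _) (sq_nonneg _)
  have hASM : AEStronglyMeasurable (fun x => u x ^ 2 * ‖f x‖ ^ 2) volume :=
    ((hmeas.pow_const 2).mul (hfm.norm.pow_const 2)).aestronglyMeasurable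
  rw [integral_eq_lintegral_of_nonneg_ae hInn hASM]
  have hrw : (∫⁻ x, ENNReal.ofReal (u x ^ 2 * ‖f x‖ ^ 2)) = ∫⁻ x, U x * F x :=
    lintegral_congr fun x => ENNReal.ofReal_mul (sq_nonneg _)
  rw [hrw]
  have hRHSnn : 0 ≤ (∫ x in Set.Ioc 0 T, u x ^ 2) *
      (ε * (∫ x, ‖deriv f x‖ ^ 2) + (1 + 1 / ε) * (∫ x, ‖f x‖ ^ 2)) :=
    mul_nonneg (setIntegral_nonneg measurableSet_Ioc fun x _ => sq_nonneg _)
      (add_nonneg (mul_nonneg hε.le (integral_nonneg fun x => sq_nonneg _))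
        (mul_nonneg (by positivity) (integral_nonneg fun x => sq_nonneg _)))
  refine ENNReal.toReal_le_of_le_ofReal hRHSnn ?_
  refine key.trans (le_of_eq ?_)
  rw [ENNReal.ofReal_mul (setIntegral_nonneg measurableSet_Ioc fun x _ => sq_nonneg _),
    ofReal_integral_eq_lintegral_ofReal huL2 (Filter.Eventually.of_forall fun x => sq_nonneg _),
    ENNReal.ofReal_add (mul_nonneg hε.le (integral_nonneg fun x => sq_nonneg _))
      (mul_nonneg (by positivity) (integral_nonneg fun x => sq_nonneg _)),
    ENNReal.ofReal_mul hε.le, ENNReal.ofReal_mul (by positivity : (0:ℝ) ≤ 1 + 1 / ε),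
    hL1eq, hL0eq, hM]
end
end
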